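/- arXiv:2402.06321 — 6 statements merged into one kernel-verified Lean document; each statement's English description precedes it below -/
import Mathlib

section
/- Let d ≥ 2, let q : (0,1) → ℝ be measurable, set V(x) := q(|x|) for x ∈ B^d∖{0} and Q(t) := e^{-2t} q(e^{-t}) for t > 0. Then ‖V‖_{V_d} = |S^{d-1}| · sup_{j∈ℕ₀} ∫_{j·log 2}^{(j+1)·log 2} |Q(t)| dt, and consequently (1/3)·|S^{d-1}|·|||Q||| ≤ ‖V‖_{V_d} ≤ |S^{d-1}|·|||Q|||. -/
open MeasureTheory Real Set
open scoped ENNReal NNReal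

noncomputable section

/-- Euclidean space `ℝ^d`. -/
abbrev Edim (d : ℕ) := EuclideanSpace ℝ (Fin d)

/-- The open unit ball `B^d ⊂ ℝ^d`. -/
def unitBall (d : ℕ) : Set (Edim d) := Metric.ball 0 1

/-- `|S^{d-1}|`, the `(d-1)`-dimensional measure of the unit sphere, i.e. `d · ω_d`. -/
def sphereArea (d : ℕ) : ℝ := d * (volume (Metric.ball (0 : Edim d) 1)).toReal

/-- The annulus `U_b = {x : b < |x| < 1}`. -/
def annulusU (d : ℕ) (b : ℝ) : Set (Edim d) := {x : Edim d | b < ‖x‖ ∧ ‖x‖ < 1}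

/-- The `𝒱_d` norm:
`‖V‖_{𝒱_d} = sup_{j ∈ ℕ} ∫_{2^{-(j+1)} < |x| < 2^{-j}} |V(x)| |x|^{2-d} dx`, as an
extended real number. -/
def VdNorm (d : ℕ) (V : Edim d → ℝ) : ℝ≥0∞ :=
  ⨆ j : ℕ, ∫⁻ x in {x : Edim d | (2:ℝ) ^ (-(j:ℝ) - 1) < ‖x‖ ∧ ‖x‖ < (2:ℝ) ^ (-(j:ℝ))},
    ENNReal.ofReal (|V x| * ‖x‖ ^ ((2:ℝ) - (d:ℝ)))

/-- The constant `β_V = (2/|S^{d-1}|) · max( √(6 |S^{d-1}| ‖V‖), 3e ‖V‖ )`. -/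
def betaV (d : ℕ) (V : Edim d → ℝ) : ℝ :=
  (2 / sphereArea d) *
    max (Real.sqrt (6 * sphereArea d * (VdNorm d V).toReal))
      (3 * Real.exp 1 * (VdNorm d V).toReal)

/-- The constant `k_V = β_V - (d-2)/2`. -/
def kV (d : ℕ) (V : Edim d → ℝ) : ℝ := betaV d V - ((d:ℝ) - 2) / 2

/-- `b`, with derivative `b'` on `(0,1]`, is a solution of the radial equation of degree `k`:
`b ∈ C¹((0,1])`, `r ↦ r^{d-1} b'(r)` is locally absolutely continuous on `(0,1]` (encoded
via a locally integrable density `g` together with the fundamental theorem of calculus), and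
`-(r^{d-1}b'(r))'/r^{d-1} + (k(k+d-2)/r² + q(r)) b(r) = 0` for a.e. `r ∈ (0,1)`. -/
def IsRadialSolution (d : ℕ) (q : ℝ → ℝ) (k : ℕ) (b b' : ℝ → ℝ) : Prop :=
  (∀ r ∈ Set.Ioc (0:ℝ) 1, HasDerivWithinAt b (b' r) (Set.Ioc 0 1) r) ∧
  ContinuousOn b' (Set.Ioc 0 1) ∧
  ∃ g : ℝ → ℝ, MeasureTheory.LocallyIntegrableOn g (Set.Ioc 0 1) ∧
    (∀ r₁ ∈ Set.Ioc (0:ℝ) 1, ∀ r₂ ∈ Set.Ioc (0:ℝ) 1, r₁ ≤ r₂ →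
      r₂ ^ ((d:ℝ) - 1) * b' r₂ - r₁ ^ ((d:ℝ) - 1) * b' r₁ = ∫ t in r₁..r₂, g t) ∧
    (∀ᵐ r ∂(volume.restrict (Set.Ioo (0:ℝ) 1)),
      -(g r) / r ^ ((d:ℝ) - 1) + (((k:ℝ) * ((k:ℝ) + (d:ℝ) - 2)) / r ^ 2 + q r) * b r = 0)

/-- The normalized solution of the radial equation of degree `k` from Lemma 2.1:
`b(1) = 1` together with the weighted square integrability `∫₀¹ |b(r)|² r^{d-2} dr < ∞`. -/
def IsDtNSolution (d : ℕ) (q : ℝ → ℝ) (k : ℕ) (b b' : ℝ → ℝ) : Prop :=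
  IsRadialSolution d q k b b' ∧ b 1 = 1 ∧
    (∫⁻ r in Set.Ioo (0:ℝ) 1, ENNReal.ofReal ((b r) ^ 2 * r ^ ((d:ℝ) - 2))) < ⊤

/-- `lamk` is the generalized Dirichlet-to-Neumann eigenvalue `λ_k[V]` of the radial
potential with profile `q`: if there is a (necessarily unique) normalized solution `b_k` of
the radial equation of degree `k` which is square integrable for the weight `r^{d-2}`, then
`λ_k[V] = b_k'(1)`; otherwise `λ_k[V] = k`. -/
def IsGenEigenvalue (d : ℕ) (q : ℝ → ℝ) (k : ℕ) (lamk : ℝ) : Prop :=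
  (∃ b b' : ℝ → ℝ, (IsDtNSolution d q k b b' ∧
      ∀ c c' : ℝ → ℝ, IsDtNSolution d q k c c' → Set.EqOn c b (Set.Ioc 0 1)) ∧
      b' 1 = lamk) ∨
  (¬ (∃ b b' : ℝ → ℝ, IsDtNSolution d q k b b' ∧
      ∀ c c' : ℝ → ℝ, IsDtNSolution d q k c c' → Set.EqOn c b (Set.Ioc 0 1)) ∧
    lamk = k)

/-- `W` is a Born approximation of the radial potential `V = q(|·|) ∈ 𝒱_d`: `W` is a radial
measurable function such that, for some integer `k₀ > k_V`, `∫_{B^d} |W(x)||x|^{2k₀} dx < ∞`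
and `(1/|S^{d-1}|) ∫_{B^d} W(x) |x|^{2k} dx = λ_k[V] - k` for every integer `k ≥ k₀`. -/
def IsBornApprox (d : ℕ) (q : ℝ → ℝ) (W : Edim d → ℝ) : Prop :=
  Measurable W ∧ (∃ w : ℝ → ℝ, ∀ x, W x = w ‖x‖) ∧
  ∃ lam : ℕ → ℝ, (∀ k : ℕ, IsGenEigenvalue d q k (lam k)) ∧
    ∃ k₀ : ℕ, kV d (fun x : Edim d => q ‖x‖) < (k₀:ℝ) ∧
      (∫⁻ x in unitBall d, ENNReal.ofReal (|W x| * ‖x‖ ^ (2 * k₀))) < ⊤ ∧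
      ∀ k : ℕ, k₀ ≤ k →
        (sphereArea d)⁻¹ * ∫ x in unitBall d, W x * ‖x‖ ^ (2 * k) = lam k - (k:ℝ)

/-- `|||Q||| = sup_{y>0} ∫_y^{y+1} |Q(t)| dt`, as an extended real number. -/
def tripleNorm (Q : ℝ → ℝ) : ℝ≥0∞ :=
  ⨆ y : {y : ℝ // 0 < y}, ∫⁻ t in Set.Ioc y.1 (y.1 + 1), ENNReal.ofReal |Q t|

/-
Polar coordinates and the substitution `|x| = e^{-t}` turn the dyadic annulus
`2^{-(j+1)} < |x| < 2^{-j}` into `|S^{d-1}|` times the integral of `|Q|` over the block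
`(j log 2, (j+1) log 2]`: the weight `r^{d-1} · r^{2-d}` and the Jacobian `e^{-t}` combine to the
factor `e^{-2t}` in `Q`. Since `1/2 ≤ log 2 ≤ 1`, each block lies in a unit interval `(y, y+1]`
with `y > 0` (for the first block, after exhausting `(0, log 2]` by `(ε, log 2]`), and each unit
interval `(y, y+1]` with `y > 0` is covered by three consecutive blocks.
-/

open Metric

section UnitIntervals

variable (μ : Measure ℝ)

lemma iUnion_Ioc_add_one_div (a b : ℝ) : ⋃ n : ℕ, Ioc (a + 1 / (n + 1)) b = Ioc a b := by
  ext t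
  simp only [mem_iUnion, mem_Ioc]
  constructor
  · rintro ⟨n, hn, htb⟩
    exact ⟨(le_add_of_nonneg_right (by positivity)).trans_lt hn, htb⟩
  · rintro ⟨hat, htb⟩
    obtain ⟨n, hn⟩ := exists_nat_one_div_lt (sub_pos.2 hat)
    exact ⟨n, by linarith, htb⟩

lemma measure_Ioc_le_iSup_measure_Ioc_unit {a b : ℝ} (ha : 0 ≤ a) (hb : b ≤ a + 1) :
    μ (Ioc a b) ≤ ⨆ y : {y : ℝ // 0 < y}, μ (Ioc y.1 (y.1 + 1)) := by
  have hmono : Monotone fun n : ℕ => Ioc (a + 1 / (n + 1)) b := fun m n hmn =>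
    Ioc_subset_Ioc_left (by gcongr)
  rw [← iUnion_Ioc_add_one_div, hmono.measure_iUnion]
  refine iSup_le fun n => ?_
  have hε : (0 : ℝ) < 1 / (n + 1) := by positivity
  calc μ (Ioc (a + 1 / (n + 1)) b) ≤ μ (Ioc (a + 1 / (n + 1)) (a + 1 / (n + 1) + 1)) :=
        measure_mono (Ioc_subset_Ioc_right (by linarith))
    _ ≤ _ := le_iSup (fun y : {y : ℝ // 0 < y} => μ (Ioc y.1 (y.1 + 1))) ⟨_, by linarith⟩

lemma iSup_measure_Ioc_nat_mul_le_iSup_measure_Ioc_unit {L : ℝ} (hL₀ : 0 ≤ L)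
    (hL₁ : L ≤ 1) :
    ⨆ j : ℕ, μ (Ioc (j * L) ((j + 1) * L)) ≤
      ⨆ y : {y : ℝ // 0 < y}, μ (Ioc y.1 (y.1 + 1)) :=
  iSup_le fun j => measure_Ioc_le_iSup_measure_Ioc_unit μ (by positivity) (by nlinarith)

lemma iSup_measure_Ioc_unit_le_three_mul_iSup_measure_Ioc_nat_mul {L : ℝ} (hL : 1 ≤ 2 * L) :
    ⨆ y : {y : ℝ // 0 < y}, μ (Ioc y.1 (y.1 + 1)) ≤
      3 * ⨆ j : ℕ, μ (Ioc (j * L) ((j + 1) * L)) := by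
  set B : ℕ → Set ℝ := fun j => Ioc (j * L) ((j + 1) * L)
  set S := ⨆ j : ℕ, μ (B j)
  have hB : ∀ j, μ (B j) ≤ S := le_iSup (fun j => μ (B j))
  have hL₀ : 0 < L := by linarith
  refine iSup_le fun ⟨y, hy⟩ => ?_
  set j := ⌊y / L⌋₊
  have hjy : j * L ≤ y := (le_div_iff₀ hL₀).1 (Nat.floor_le (by positivity))
  have hyj : y < (j + 1) * L := (div_lt_iff₀ hL₀).1 (Nat.lt_floor_add_one _)
  have hcover : Ioc y (y + 1) ⊆ B j ∪ B (j + 1) ∪ B (j + 2) := by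
    intro t ⟨hyt, hty⟩
    simp only [B, mem_union, mem_Ioc, Nat.cast_add, Nat.cast_one, Nat.cast_ofNat]
    by_cases h₁ : t ≤ (j + 1) * L
    · exact Or.inl (Or.inl ⟨by linarith, h₁⟩)
    by_cases h₂ : t ≤ (j + 1 + 1) * L
    · exact Or.inl (Or.inr ⟨by linarith, h₂⟩)
    · exact Or.inr ⟨by linarith, by linarith⟩
  calc μ (Ioc y (y + 1)) ≤ μ (B j ∪ B (j + 1) ∪ B (j + 2)) := measure_mono hcover
    _ ≤ μ (B j) + μ (B (j + 1)) + μ (B (j + 2)) :=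
      (measure_union_le _ _).trans (add_le_add_left (measure_union_le _ _) _)
    _ ≤ S + S + S := by gcongr <;> apply hB
    _ = 3 * S := by ring

end UnitIntervals

section Polar

variable {E : Type*} [NormedAddCommGroup E] [NormedSpace ℝ E] [MeasurableSpace E] [BorelSpace E]
  [FiniteDimensional ℝ E] [Nontrivial E] (μ : Measure E) [μ.IsAddHaarMeasure]

local notation "dim" => Module.finrank ℝ

lemma lintegral_fun_norm_addHaar {f : ℝ → ℝ≥0∞} (hf : Measurable f) :
    ∫⁻ x, f ‖x‖ ∂μ =
      dim E * μ (ball 0 1) *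
        ∫⁻ r in Ioi (0 : ℝ), ENNReal.ofReal (r ^ (dim E - 1)) * f r := by
  have hIoi : ∫⁻ r : Ioi (0 : ℝ), f r ∂(Measure.volumeIoiPow (dim E - 1))
      = ∫⁻ r in Ioi (0 : ℝ), ENNReal.ofReal (r ^ (dim E - 1)) * f r := by
    rw [Measure.volumeIoiPow,
      lintegral_withDensity_eq_lintegral_mul _
        (measurable_subtype_coe.pow_const _).ennreal_ofReal
        (show Measurable fun r : Ioi (0 : ℝ) => f r from hf.comp measurable_subtype_coe),
      ← lintegral_subtype_comap measurableSet_Ioi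
        (fun r => ENNReal.ofReal (r ^ (dim E - 1)) * f r)]
    rfl
  calc ∫⁻ x, f ‖x‖ ∂μ
        = ∫⁻ x : ({0}ᶜ : Set E), f ‖x.1‖ ∂(μ.comap (↑)) := by
        rw [lintegral_subtype_comap (measurableSet_singleton _).compl (fun x => f ‖x‖),
          restrict_compl_singleton]
    _ = ∫⁻ p : sphere (0 : E) 1 × Ioi (0 : ℝ), f p.2
          ∂(μ.toSphere.prod (.volumeIoiPow (dim E - 1))) := by
        simpa using μ.measurePreserving_homeomorphUnitSphereProd.lintegral_comp_emb
          (Homeomorph.measurableEmbedding _) (fun p => f p.2)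
    _ = μ.toSphere univ * ∫⁻ r : Ioi (0 : ℝ), f r ∂(.volumeIoiPow (dim E - 1)) := by
        rw [lintegral_prod (fun p : sphere (0 : E) 1 × Ioi (0 : ℝ) => f p.2)
          (hf.comp (measurable_subtype_coe.comp measurable_snd)).aemeasurable]
        simp [lintegral_const, mul_comm]
    _ = _ := by rw [Measure.toSphere_apply_univ, hIoi]

lemma lintegral_annulus_fun_norm_addHaar {f : ℝ → ℝ≥0∞} (hf : Measurable f) {a b : ℝ}
    (ha : 0 ≤ a) :
    ∫⁻ x in {x : E | a < ‖x‖ ∧ ‖x‖ < b}, f ‖x‖ ∂μ =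
      dim E * μ (ball 0 1) * ∫⁻ r in Ioo a b, ENNReal.ofReal (r ^ (dim E - 1)) * f r := by
  have hIoo : Ioo a b ∩ Ioi 0 = Ioo a b := inter_eq_left.2 fun r hr => ha.trans_lt hr.1
  calc ∫⁻ x in (‖·‖) ⁻¹' Ioo a b, f ‖x‖ ∂μ
        = ∫⁻ x, (Ioo a b).indicator f ‖x‖ ∂μ := by
        rw [← lintegral_indicator (measurable_norm measurableSet_Ioo)]
        exact lintegral_congr fun x => indicator_comp_right (‖·‖)
    _ = _ := by
        rw [lintegral_fun_norm_addHaar μ (hf.indicator measurableSet_Ioo)]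
        simp_rw [← indicator_mul_right _ (fun r => ENNReal.ofReal (r ^ (dim E - 1))) f]
        rw [lintegral_indicator measurableSet_Ioo, Measure.restrict_restrict measurableSet_Ioo,
          hIoo]

end Polar

lemma lintegral_Ioo_exp_neg (c₁ c₂ : ℝ) (g : ℝ → ℝ≥0∞) :
    ∫⁻ r in Ioo (exp (-c₂)) (exp (-c₁)), g r =
      ∫⁻ t in Ioo c₁ c₂, ENNReal.ofReal (exp (-t)) * g (exp (-t)) := by
  have himage : (fun t => exp (-t)) '' Ioo c₁ c₂ = Ioo (exp (-c₂)) (exp (-c₁)) := by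
    rw [show (fun t => exp (-t)) = exp ∘ Neg.neg from rfl, image_comp, image_neg_Ioo,
      image_exp_Ioo]
  have hderiv : ∀ t ∈ Ioo c₁ c₂,
      HasDerivWithinAt (fun t => exp (-t)) (-exp (-t)) (Ioo c₁ c₂) t :=
    fun t _ => by simpa using ((hasDerivAt_neg t).exp).hasDerivWithinAt
  rw [← himage, lintegral_image_eq_lintegral_abs_deriv_mul measurableSet_Ioo hderiv
    (fun u _ v _ h => neg_injective (exp_injective h))]
  simp_rw [abs_neg, abs_of_pos (exp_pos _)]

lemma ofReal_sphereArea (d : ℕ) :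
    ENNReal.ofReal (sphereArea d) = d * volume (ball (0 : Edim d) 1) := by
  rw [sphereArea, ENNReal.ofReal_mul (by positivity), ENNReal.ofReal_natCast,
    ENNReal.ofReal_toReal measure_ball_lt_top.ne]

lemma lintegral_dyadic_annulus {d : ℕ} [NeZero d] {q : ℝ → ℝ} (hq : Measurable q) (j : ℕ) :
    ∫⁻ x in {x : Edim d | (2:ℝ) ^ (-(j:ℝ) - 1) < ‖x‖ ∧
        ‖x‖ < (2:ℝ) ^ (-(j:ℝ))}, ENNReal.ofReal (|q ‖x‖| * ‖x‖ ^ ((2:ℝ) - d)) =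
      ENNReal.ofReal (sphereArea d) *
        ∫⁻ t in Ioc (j * log 2) ((j + 1) * log 2),
          ENNReal.ofReal |exp (-2 * t) * q (exp (-t))| := by
  have hf : Measurable fun r : ℝ => ENNReal.ofReal (|q r| * r ^ ((2:ℝ) - d)) :=
    (hq.abs.mul (measurable_id.pow_const _)).ennreal_ofReal
  have htwo : ∀ x : ℝ, (2 : ℝ) ^ (-x) = exp (-(x * log 2)) := fun x => by
    rw [rpow_def_of_pos two_pos]; ring_nf
  have hweight : ∀ r : ℝ, 0 < r → r ^ (d - 1) * r ^ ((2:ℝ) - d) = r := fun r hr => by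
    rw [← rpow_natCast, Nat.cast_sub NeZero.one_le, ← rpow_add hr]
    norm_num
  rw [show -(j:ℝ) - 1 = -(j + 1) by ring, htwo, htwo,
    lintegral_annulus_fun_norm_addHaar volume hf (exp_pos _).le, finrank_euclideanSpace_fin,
    ← ofReal_sphereArea, lintegral_Ioo_exp_neg, setLIntegral_congr Ioo_ae_eq_Ioc]
  congr 1
  refine lintegral_congr fun t => ?_
  have hr := exp_pos (-t)
  rw [← ENNReal.ofReal_mul (by positivity), ← ENNReal.ofReal_mul hr.le, abs_mul,
    abs_of_pos (exp_pos _), show -2 * t = -t + -t by ring, exp_add]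
  congr 1
  calc _ = exp (-t) * |q (exp (-t))| * (exp (-t) ^ (d - 1) * exp (-t) ^ ((2:ℝ) - d)) := by ring
    _ = _ := by rw [hweight _ hr]; ring

/-- Remark 2.2 of the paper. For `d ≥ 2`, `q : (0,1) → ℝ` measurable,
`V(x) = q(|x|)` and `Q(t) = e^{-2t} q(e^{-t})`, one has
`‖V‖_{𝒱_d} = |S^{d-1}| · sup_j ∫_{j log 2}^{(j+1) log 2} |Q(t)| dt`, and consequently
`(1/3)|S^{d-1}| |||Q||| ≤ ‖V‖_{𝒱_d} ≤ |S^{d-1}| |||Q|||`. -/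
theorem statement1 (d : ℕ) (hd : 2 ≤ d) (q : ℝ → ℝ) (hq : Measurable q) :
    (VdNorm d (fun x : Edim d => q ‖x‖)
        = ENNReal.ofReal (sphereArea d) *
          ⨆ j : ℕ, ∫⁻ t in Set.Ioc ((j:ℝ) * Real.log 2) (((j:ℝ) + 1) * Real.log 2),
            ENNReal.ofReal |Real.exp (-2 * t) * q (Real.exp (-t))|) ∧
    ENNReal.ofReal (sphereArea d) *
        tripleNorm (fun t => Real.exp (-2 * t) * q (Real.exp (-t))) / 3
      ≤ VdNorm d (fun x : Edim d => q ‖x‖) ∧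
    VdNorm d (fun x : Edim d => q ‖x‖)
      ≤ ENNReal.ofReal (sphereArea d) *
          tripleNorm (fun t => Real.exp (-2 * t) * q (Real.exp (-t))) := by
  have : NeZero d := ⟨by omega⟩
  set μ : Measure ℝ := volume.withDensity fun t => ENNReal.ofReal |exp (-2 * t) * q (exp (-t))|
  have hμ : ∀ a b : ℝ,
      ∫⁻ t in Ioc a b, ENNReal.ofReal |exp (-2 * t) * q (exp (-t))| = μ (Ioc a b) := fun a b =>
    (withDensity_apply _ measurableSet_Ioc).symm
  have hVd : VdNorm d (fun x : Edim d => q ‖x‖) =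
      ENNReal.ofReal (sphereArea d) * ⨆ j : ℕ, μ (Ioc (j * log 2) ((j + 1) * log 2)) := by
    simp_rw [VdNorm, lintegral_dyadic_annulus hq, hμ, ENNReal.mul_iSup]
  have hT : tripleNorm (fun t => exp (-2 * t) * q (exp (-t))) =
      ⨆ y : {y : ℝ // 0 < y}, μ (Ioc y.1 (y.1 + 1)) := by
    simp_rw [tripleNorm, hμ]
  refine ⟨by simp_rw [hVd, hμ], ?_, ?_⟩
  · rw [hVd, hT, ENNReal.div_le_iff (by norm_num) (by norm_num), mul_assoc]
    grw [iSup_measure_Ioc_unit_le_three_mul_iSup_measure_Ioc_nat_mul μ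
      (by linarith [log_two_gt_d9])]
    rw [mul_comm 3]
  · rw [hVd, hT]
    grw [iSup_measure_Ioc_nat_mul_le_iSup_measure_Ioc_unit μ (log_pos one_lt_two).le
      (by linarith [log_two_lt_d9])]
end
end

section
/- Let a > 0 and f ∈ L¹(0,a). Suppose K and K̃ are measurable real-valued functions on {(t,s) : 0 ≤ s ≤ t ≤ a} such that each of them satisfies the integral equation K(t,s₂) = K(t,s₁) + ∫_{s₁}^{s₂} ∫_{y₂}^{t} K(y₁,y₂) K(t - y₁ + y₂, y₂) dy₁ dy₂ for all 0 < s₁ < s₂ < t < a, and each can be written in the form K(t,s) = f(t) + K₀(t,s) where K₀ is continuous on {(t,s) : 0 ≤ s ≤ t ≤ a} and K₀(t,0) = 0 for all t ∈ [0,a]. Then K and K̃ coincide: for every s ∈ [0,a], K(t,s) = K̃(t,s) for a.e. t ∈ (s,a). -/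
/-!
Write `d = K - K'`. Both kernels differ from `f` by a term bounded by some `M` on the triangle,
so `d` is bounded there. Subtracting the two integral equations and splitting the integrand as
`d(y₁)·K(u) + K'(y₁)·d(u)` shows that a bound `|d(t,s)| ≤ ψ(s)` on the open triangle improves
to `|d(t,s)| ≤ C ∫₀ˢ ψ` with `C = 2(‖f‖₁ + aM)`, once `s₁ → 0` in the equation, where `d → 0`.
Iterating from the uniform bound gives `|d(t,s)| ≤ 2M (Cs)ⁿ / n!` for every `n`, so `d = 0`.
-/

open MeasureTheory Real Set
open scoped ENNReal

noncomputable section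

/-- The closed triangle `{(t,s) : 0 ≤ s ≤ t ≤ a}`. -/
def triangleK (a : ℝ) : Set (ℝ × ℝ) := {p : ℝ × ℝ | 0 ≤ p.2 ∧ p.2 ≤ p.1 ∧ p.1 ≤ a}

/-- Absolute convergence of the iterated integrals appearing in the integral equation
for `K`. -/
def KEqnIntegrable (a : ℝ) (K : ℝ → ℝ → ℝ) : Prop :=
  ∀ s₁ s₂ t : ℝ, 0 < s₁ → s₁ < s₂ → s₂ < t → t < a →
    (∀ y₂ ∈ Set.Icc s₁ s₂,
      IntervalIntegrable (fun y₁ => K y₁ y₂ * K (t - y₁ + y₂) y₂) volume y₂ t) ∧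
    IntervalIntegrable
      (fun y₂ => ∫ y₁ in y₂..t, K y₁ y₂ * K (t - y₁ + y₂) y₂) volume s₁ s₂

/-- `K` satisfies the integral equation
`K(t,s₂) = K(t,s₁) + ∫_{s₁}^{s₂} ∫_{y₂}^{t} K(y₁,y₂) K(t-y₁+y₂,y₂) dy₁ dy₂`
for all `0 < s₁ < s₂ < t < a`. -/
def KEqnHolds (a : ℝ) (K : ℝ → ℝ → ℝ) : Prop :=
  ∀ s₁ s₂ t : ℝ, 0 < s₁ → s₁ < s₂ → s₂ < t → t < a →
    K t s₂ = K t s₁ +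
      ∫ y₂ in s₁..s₂, ∫ y₁ in y₂..t, K y₁ y₂ * K (t - y₁ + y₂) y₂

/-- `K(t,s) = f(t) + K₀(t,s)` on the triangle, with `K₀` continuous there and
`K₀(·,0) = 0`. -/
def KDecomp (a : ℝ) (f : ℝ → ℝ) (K : ℝ → ℝ → ℝ) : Prop :=
  ∃ K₀ : ℝ → ℝ → ℝ,
    ContinuousOn (fun p : ℝ × ℝ => K₀ p.1 p.2) (triangleK a) ∧
    (∀ t ∈ Set.Icc (0:ℝ) a, K₀ t 0 = 0) ∧
    ∀ t s : ℝ, 0 ≤ s → s ≤ t → t ≤ a → K t s = f t + K₀ t s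

open Filter Topology intervalIntegral
open scoped Nat

theorem abs_integral_mul_reflect_sub_le {k k' h : ℝ → ℝ} {b t δ : ℝ} (hbt : b ≤ t)
    (hh : IntervalIntegrable h volume b t)
    (hk : ∀ y ∈ Ioo b t, |k y| ≤ h y) (hk' : ∀ y ∈ Ioo b t, |k' y| ≤ h y)
    (hkk' : ∀ y ∈ Ioo b t, |k y - k' y| ≤ δ) :
    |∫ y in b..t, (k y * k (t - y + b) - k' y * k' (t - y + b))| ≤
      2 * δ * ∫ y in b..t, h y := by
  have hreflect : ∀ y ∈ Ioo b t, t - y + b ∈ Ioo b t := fun y hy =>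
    ⟨by linarith [hy.2], by linarith [hy.1]⟩
  have hh_reflect : IntervalIntegrable (fun y => h (t - y + b)) volume b t := by
    simpa [sub_add_eq_add_sub] using (hh.comp_sub_left (t + b)).symm
  calc |∫ y in b..t, (k y * k (t - y + b) - k' y * k' (t - y + b))|
      ≤ ∫ y in b..t, (δ * h (t - y + b) + δ * h y) := by
        rw [← Real.norm_eq_abs]
        refine norm_integral_le_of_norm_le hbt ?_ ((hh_reflect.const_mul δ).add (hh.const_mul δ))
        -- at `y = t` the reflected point `b` lies outside `Ioo b t`
        filter_upwards [Measure.ae_ne volume t] with y hyt hy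
        replace hy : y ∈ Ioo b t := ⟨hy.1, hy.2.lt_of_ne hyt⟩
        set u := t - y + b
        have hδ : 0 ≤ δ := (abs_nonneg _).trans (hkk' y hy)
        calc ‖k y * k u - k' y * k' u‖ = |(k y - k' y) * k u + k' y * (k u - k' u)| := by
              rw [Real.norm_eq_abs]; ring_nf
          _ ≤ |k y - k' y| * |k u| + |k' y| * |k u - k' u| := by
              rw [← abs_mul, ← abs_mul]; exact abs_add_le _ _
          _ ≤ δ * h u + h y * δ :=
              add_le_add (mul_le_mul (hkk' y hy) (hk u (hreflect y hy)) (abs_nonneg _) hδ)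
                (mul_le_mul (hk' y hy) (hkk' u (hreflect y hy)) (abs_nonneg _)
                  ((abs_nonneg _).trans (hk' y hy)))
          _ = δ * h u + δ * h y := by ring
    _ = 2 * δ * ∫ y in b..t, h y := by
        rw [integral_add (hh_reflect.const_mul δ) (hh.const_mul δ),
          intervalIntegral.integral_const_mul, intervalIntegral.integral_const_mul]
        simp only [sub_add_eq_add_sub, integral_comp_sub_left (fun x => h x) (t + b)]
        simp only [add_sub_cancel_left, add_sub_cancel_right]
        ring

theorem abs_le_pow_div_factorial_of_abs_le_integral {ι : Type*} {S : Set ι} {σ d : ι → ℝ}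
    {C M : ℝ} (hM : ∀ i ∈ S, |d i| ≤ M)
    (hstep : ∀ ψ : ℝ → ℝ, Continuous ψ → (∀ i ∈ S, |d i| ≤ ψ (σ i)) →
      ∀ i ∈ S, |d i| ≤ ∫ r in 0..σ i, C * ψ r)
    (n : ℕ) : ∀ i ∈ S, |d i| ≤ M * (C * σ i) ^ n / n ! := by
  induction n with
  | zero => simpa using hM
  | succ n ih =>
    intro i hi
    refine (hstep (fun r => M * (C * r) ^ n / n !) (by fun_prop) ih i hi).trans_eq ?_
    have hpow : ∀ r : ℝ, C * (M * (C * r) ^ n / n !) = C ^ (n + 1) * M / n ! * r ^ n := by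
      intro r; rw [mul_pow]; ring
    simp_rw [hpow]
    rw [intervalIntegral.integral_const_mul, integral_pow, Nat.factorial_succ]
    push_cast
    field_simp
    ring

theorem eq_zero_of_abs_le_integral {ι : Type*} {S : Set ι} {σ d : ι → ℝ} {C M : ℝ}
    (hM : ∀ i ∈ S, |d i| ≤ M)
    (hstep : ∀ ψ : ℝ → ℝ, Continuous ψ → (∀ i ∈ S, |d i| ≤ ψ (σ i)) →
      ∀ i ∈ S, |d i| ≤ ∫ r in 0..σ i, C * ψ r) :
    ∀ i ∈ S, d i = 0 := by
  intro i hi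
  have hlim : Tendsto (fun n : ℕ => M * (C * σ i) ^ n / n !) atTop (𝓝 0) := by
    simpa [mul_div_assoc] using
      (FloorSemiring.tendsto_pow_div_factorial_atTop (C * σ i)).const_mul M
  exact abs_nonpos_iff.mp <|
    ge_of_tendsto' hlim fun n => abs_le_pow_div_factorial_of_abs_le_integral hM hstep n i hi

theorem isCompact_triangleK (a : ℝ) : IsCompact (triangleK a) := by
  refine (isCompact_Icc (a := ((0 : ℝ), (0 : ℝ))) (b := (a, a))).of_isClosed_subset ?_ ?_
  · exact (isClosed_le continuous_const continuous_snd).inter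
      ((isClosed_le continuous_snd continuous_fst).inter
        (isClosed_le continuous_fst continuous_const))
  · rintro ⟨t, s⟩ ⟨h0s, hst, hta⟩
    exact ⟨⟨h0s.trans hst, h0s⟩, hta, hst.trans hta⟩

theorem intervalIntegrable_abs_of_integrableOn {f : ℝ → ℝ} {S : Set ℝ} {b t : ℝ}
    (hf : IntegrableOn f S) (hbt : b ≤ t) (hsub : Ioc b t ⊆ S) :
    IntervalIntegrable (fun y => |f y|) volume b t :=
  (intervalIntegrable_iff_integrableOn_Ioc_of_le hbt).2 (IntegrableOn.mono_set hf.abs hsub)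

theorem integral_abs_add_const_le {f : ℝ → ℝ} {a M b t : ℝ} (hf : IntegrableOn f (Ioo 0 a))
    (hM : 0 ≤ M) (hb : 0 < b) (hbt : b ≤ t) (hta : t < a) :
    ∫ y in b..t, (|f y| + M) ≤ (∫ x in Ioo 0 a, |f x|) + a * M := by
  have hsub : Ioc b t ⊆ Ioo 0 a := fun y hy => ⟨hb.trans hy.1, hy.2.trans_lt hta⟩
  rw [integral_add (intervalIntegrable_abs_of_integrableOn hf hbt hsub) intervalIntegrable_const,
    intervalIntegral.integral_const, smul_eq_mul, integral_of_le hbt]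
  refine add_le_add ?_ (mul_le_mul_of_nonneg_right (by linarith) hM)
  exact setIntegral_mono_set (Integrable.abs hf) (Eventually.of_forall fun _ => abs_nonneg _)
    (Eventually.of_forall hsub)

theorem abs_inner_integral_sub_le {a M : ℝ} {f : ℝ → ℝ} {K K' : ℝ → ℝ → ℝ}
    (hf : IntegrableOn f (Ioo 0 a)) (hM : 0 ≤ M)
    (hK : ∀ t s, 0 ≤ s → s ≤ t → t ≤ a → |K t s - f t| ≤ M)
    (hK' : ∀ t s, 0 ≤ s → s ≤ t → t ≤ a → |K' t s - f t| ≤ M)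
    {s t δ : ℝ} (hs : 0 < s) (hst : s < t) (hta : t < a)
    (hKi : IntervalIntegrable (fun y => K y s * K (t - y + s) s) volume s t)
    (hK'i : IntervalIntegrable (fun y => K' y s * K' (t - y + s) s) volume s t)
    (hδ : ∀ y ∈ Ioo s t, |K y s - K' y s| ≤ δ) :
    |(∫ y in s..t, K y s * K (t - y + s) s) - ∫ y in s..t, K' y s * K' (t - y + s) s| ≤
      2 * ((∫ x in Ioo 0 a, |f x|) + a * M) * δ := by
  have hδ0 : 0 ≤ δ :=
    (abs_nonneg _).trans (hδ _ ⟨left_lt_add_div_two.2 hst, add_div_two_lt_right.2 hst⟩)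
  have hfi : IntervalIntegrable (fun y => |f y| + M) volume s t :=
    (intervalIntegrable_abs_of_integrableOn hf hst.le
      fun y hy => ⟨hs.trans hy.1, hy.2.trans_lt hta⟩).add intervalIntegrable_const
  have hbound : ∀ k : ℝ → ℝ → ℝ, (∀ t s, 0 ≤ s → s ≤ t → t ≤ a → |k t s - f t| ≤ M) →
      ∀ y ∈ Ioo s t, |k y s| ≤ |f y| + M := fun k hk y hy => by
    linarith [abs_sub_abs_le_abs_sub (k y s) (f y), hk y s hs.le hy.1.le (hy.2.trans hta).le]
  rw [← integral_sub hKi hK'i]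
  calc _ ≤ 2 * δ * ∫ y in s..t, (|f y| + M) :=
        abs_integral_mul_reflect_sub_le hst.le hfi (hbound K hK) (hbound K' hK') hδ
    _ ≤ 2 * δ * ((∫ x in Ioo 0 a, |f x|) + a * M) := by
        gcongr
        exact integral_abs_add_const_le hf hM hs hst.le hta
    _ = _ := by ring

theorem abs_sub_sub_le_integral_of_KEqn {a M : ℝ} {f : ℝ → ℝ} {K K' : ℝ → ℝ → ℝ}
    (hf : IntegrableOn f (Ioo 0 a)) (hM : 0 ≤ M)
    (hK : ∀ t s, 0 ≤ s → s ≤ t → t ≤ a → |K t s - f t| ≤ M)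
    (hK' : ∀ t s, 0 ≤ s → s ≤ t → t ≤ a → |K' t s - f t| ≤ M)
    (hKint : KEqnIntegrable a K) (hK'int : KEqnIntegrable a K')
    (hKeq : KEqnHolds a K) (hK'eq : KEqnHolds a K')
    {ψ : ℝ → ℝ} (hψc : Continuous ψ)
    (hψ : ∀ t s, 0 < s → s < t → t < a → |K t s - K' t s| ≤ ψ s)
    {s₁ s t : ℝ} (hs₁ : 0 < s₁) (hs₁s : s₁ < s) (hst : s < t) (hta : t < a) :
    |(K t s - K' t s) - (K t s₁ - K' t s₁)| ≤
      ∫ r in s₁..s, 2 * ((∫ x in Ioo 0 a, |f x|) + a * M) * ψ r := by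
  obtain ⟨hKi, hKi₂⟩ := hKint s₁ s t hs₁ hs₁s hst hta
  obtain ⟨hK'i, hK'i₂⟩ := hK'int s₁ s t hs₁ hs₁s hst hta
  have hdiff : (K t s - K' t s) - (K t s₁ - K' t s₁) =
      ∫ y₂ in s₁..s, ((∫ y₁ in y₂..t, K y₁ y₂ * K (t - y₁ + y₂) y₂) -
        ∫ y₁ in y₂..t, K' y₁ y₂ * K' (t - y₁ + y₂) y₂) := by
    rw [integral_sub hKi₂ hK'i₂, hKeq s₁ s t hs₁ hs₁s hst hta, hK'eq s₁ s t hs₁ hs₁s hst hta]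
    ring
  rw [hdiff, ← Real.norm_eq_abs]
  refine norm_integral_le_of_norm_le hs₁s.le (Eventually.of_forall fun y₂ hy₂ => ?_)
    ((continuous_const.mul hψc).intervalIntegrable _ _)
  have hy₂0 : 0 < y₂ := hs₁.trans hy₂.1
  exact abs_inner_integral_sub_le hf hM hK hK' hy₂0 (hy₂.2.trans_lt hst) hta
    (hKi y₂ ⟨hy₂.1.le, hy₂.2⟩) (hK'i y₂ ⟨hy₂.1.le, hy₂.2⟩)
    fun y hy => hψ y y₂ hy₂0 hy.1 (hy.2.trans hta)

theorem abs_sub_le_integral_of_KEqn {a M : ℝ} {f : ℝ → ℝ} {K K' : ℝ → ℝ → ℝ}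
    (hf : IntegrableOn f (Ioo 0 a)) (hM : 0 ≤ M)
    (hK : ∀ t s, 0 ≤ s → s ≤ t → t ≤ a → |K t s - f t| ≤ M)
    (hK' : ∀ t s, 0 ≤ s → s ≤ t → t ≤ a → |K' t s - f t| ≤ M)
    (hKint : KEqnIntegrable a K) (hK'int : KEqnIntegrable a K')
    (hKeq : KEqnHolds a K) (hK'eq : KEqnHolds a K')
    (hlim : ∀ t ∈ Ioo 0 a, Tendsto (fun s => K t s - K' t s) (𝓝[>] 0) (𝓝 0))
    {ψ : ℝ → ℝ} (hψc : Continuous ψ)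
    (hψ : ∀ t s, 0 < s → s < t → t < a → |K t s - K' t s| ≤ ψ s)
    {s t : ℝ} (hs : 0 < s) (hst : s < t) (hta : t < a) :
    |K t s - K' t s| ≤ ∫ r in 0..s, 2 * ((∫ x in Ioo 0 a, |f x|) + a * M) * ψ r := by
  set C := 2 * ((∫ x in Ioo 0 a, |f x|) + a * M)
  have hleft : Tendsto (fun s₁ => |(K t s - K' t s) - (K t s₁ - K' t s₁)|) (𝓝[>] 0)
      (𝓝 |K t s - K' t s|) := by
    simpa using ((hlim t ⟨hs.trans hst, hta⟩).const_sub (K t s - K' t s)).abs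
  have hright : Tendsto (fun s₁ => ∫ r in s₁..s, C * ψ r) (𝓝[>] 0)
      (𝓝 (∫ r in 0..s, C * ψ r)) := by
    simp only [integral_symm s]
    exact ((continuous_primitive (fun _ _ => (continuous_const.mul hψc).intervalIntegrable _ _)
      s).tendsto 0).neg.mono_left nhdsWithin_le_nhds
  exact le_of_tendsto_of_tendsto hleft hright <| eventually_of_mem (Ioo_mem_nhdsGT hs)
    fun s₁ hs₁ => abs_sub_sub_le_integral_of_KEqn hf hM hK hK' hKint hK'int hKeq hK'eq hψc hψ
      hs₁.1 hs₁.2 hst hta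

theorem KDecomp.eventually_abs_sub_le {a : ℝ} {f : ℝ → ℝ} {K : ℝ → ℝ → ℝ}
    (h : KDecomp a f K) :
    ∀ᶠ M in atTop, ∀ t s, 0 ≤ s → s ≤ t → t ≤ a → |K t s - f t| ≤ M := by
  obtain ⟨K₀, hc, -, hK⟩ := h
  obtain ⟨M, hM⟩ := (isCompact_triangleK a).exists_bound_of_continuousOn hc
  filter_upwards [eventually_ge_atTop M] with M' hM' t s h0s hst hta
  rw [hK t s h0s hst hta, add_sub_cancel_left]
  exact (hM (t, s) ⟨h0s, hst, hta⟩).trans hM'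

theorem KDecomp.sub_eq_zero_at_zero {a : ℝ} {f : ℝ → ℝ} {K K' : ℝ → ℝ → ℝ}
    (hK : KDecomp a f K) (hK' : KDecomp a f K') {t : ℝ} (h0t : 0 ≤ t) (hta : t ≤ a) :
    K t 0 - K' t 0 = 0 := by
  obtain ⟨K₀, -, hK₀0, hK₀⟩ := hK
  obtain ⟨K₁, -, hK₁0, hK₁⟩ := hK'
  rw [hK₀ t 0 le_rfl h0t hta, hK₁ t 0 le_rfl h0t hta, hK₀0 t ⟨h0t, hta⟩, hK₁0 t ⟨h0t, hta⟩,
    sub_self]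

theorem KDecomp.tendsto_sub_nhdsGT_zero {a : ℝ} {f : ℝ → ℝ} {K K' : ℝ → ℝ → ℝ}
    (hK : KDecomp a f K) (hK' : KDecomp a f K') {t : ℝ} (ht : 0 < t) (hta : t ≤ a) :
    Tendsto (fun s => K t s - K' t s) (𝓝[>] 0) (𝓝 0) := by
  have hc : ContinuousWithinAt (fun s => K t s - K' t s) (Icc 0 t) 0 := by
    obtain ⟨K₀, hK₀c, -, hK₀⟩ := hK
    obtain ⟨K₁, hK₁c, -, hK₁⟩ := hK'
    have hmaps : MapsTo (fun s => (t, s)) (Icc 0 t) (triangleK a) :=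
      fun s hs => ⟨hs.1, hs.2, hta⟩
    refine (((hK₀c.sub hK₁c).comp (by fun_prop) hmaps) 0 ⟨le_rfl, ht.le⟩).congr_of_mem
      (fun s hs => ?_) ⟨le_rfl, ht.le⟩
    simp only [Function.comp_apply, Pi.sub_apply, hK₀ t s hs.1 hs.2 hta, hK₁ t s hs.1 hs.2 hta]
    ring
  have hlim := hc.tendsto.mono_left (nhdsWithin_mono 0 (Ioo_subset_Icc_self (b := t)))
  rwa [nhdsWithin_Ioo_eq_nhdsGT ht, hK.sub_eq_zero_at_zero hK' ht.le hta] at hlim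

theorem statement9_general (a : ℝ) (f : ℝ → ℝ)
    (hf : IntegrableOn f (Set.Ioo 0 a))
    (K K' : ℝ → ℝ → ℝ)
    (hKint : KEqnIntegrable a K) (hK'int : KEqnIntegrable a K')
    (hKeq : KEqnHolds a K) (hK'eq : KEqnHolds a K')
    (hKdec : KDecomp a f K) (hK'dec : KDecomp a f K') :
    ∀ s ∈ Set.Icc (0:ℝ) a,
      ∀ᵐ t ∂(volume.restrict (Set.Ioo s a)), K t s = K' t s := by
  obtain ⟨M, ⟨hKM, hK'M⟩, hM⟩ := ((hKdec.eventually_abs_sub_le.and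
    hK'dec.eventually_abs_sub_le).and (eventually_ge_atTop 0)).exists
  have hzero : ∀ p ∈ {p : ℝ × ℝ | 0 < p.2 ∧ p.2 < p.1 ∧ p.1 < a},
      K p.1 p.2 - K' p.1 p.2 = 0 := by
    refine eq_zero_of_abs_le_integral (σ := Prod.snd) (M := 2 * M) (fun p hp => ?_)
      fun ψ hψc hψ p hp => abs_sub_le_integral_of_KEqn hf hM hKM hK'M hKint hK'int hKeq hK'eq
        (fun t ht => hKdec.tendsto_sub_nhdsGT_zero hK'dec ht.1 ht.2.le) hψc
        (fun t s hs hst hta => hψ (t, s) ⟨hs, hst, hta⟩) hp.1 hp.2.1 hp.2.2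
    obtain ⟨hs, hst, hta⟩ := hp
    calc |K p.1 p.2 - K' p.1 p.2| ≤ |K p.1 p.2 - f p.1| + |K' p.1 p.2 - f p.1| := by
          rw [abs_sub_comm (K' _ _)]; exact abs_sub_le _ _ _
      _ ≤ 2 * M := by linarith [hKM _ _ hs.le hst.le hta.le, hK'M _ _ hs.le hst.le hta.le]
  intro s hs
  refine ae_restrict_of_forall_mem measurableSet_Ioo fun t ht => sub_eq_zero.1 ?_
  rcases hs.1.eq_or_lt with rfl | hs0
  · exact hKdec.sub_eq_zero_at_zero hK'dec ht.1.le ht.2.le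
  · exact hzero (t, s) ⟨hs0, ht.1, ht.2⟩

/-- Lemma 4.3 of the paper. Let `a > 0` and `f ∈ L¹(0,a)`. Two measurable
solutions of the integral equation on `{0 ≤ s ≤ t ≤ a}` which are continuous perturbations
`f(t) + K₀(t,s)` of `f` with `K₀(·,0) = 0` coincide: for every `s ∈ [0,a]`,
`K(t,s) = K̃(t,s)` for a.e. `t ∈ (s,a)`. -/
theorem statement9 (a : ℝ) (ha : 0 < a) (f : ℝ → ℝ)
    (hf : IntegrableOn f (Set.Ioo 0 a))
    (K K' : ℝ → ℝ → ℝ)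
    (hKm : Measurable ((triangleK a).indicator (Function.uncurry fun t s => K t s)))
    (hK'm : Measurable ((triangleK a).indicator (Function.uncurry fun t s => K' t s)))
    (hKint : KEqnIntegrable a K) (hK'int : KEqnIntegrable a K')
    (hKeq : KEqnHolds a K) (hK'eq : KEqnHolds a K')
    (hKdec : KDecomp a f K) (hK'dec : KDecomp a f K') :
    ∀ s ∈ Set.Icc (0:ℝ) a,
      ∀ᵐ t ∂(volume.restrict (Set.Ioo s a)), K t s = K' t s :=
  statement9_general a f hf K K' hKint hK'int hKeq hK'eq hKdec hK'dec
end
end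

section
/- Let b ∈ (0,1) and f ∈ L¹(b,1). Suppose U and Ũ are measurable real-valued functions on {(r,s) : b < r ≤ s ≤ 1} such that each of them satisfies the integral equation U(r,s₂) = U(r,s₁) + ∫_{s₂}^{s₁} y₂ ( ∫_r^{y₂} U(y₁,y₂) U(r·y₂/y₁, y₂) dy₁/y₁ ) dy₂ for all b < r < s₂ < s₁ < 1, and each can be written in the form U(r,s) = f(r) + U₀(r,s) where U₀ is continuous on {(r,s) : b < r ≤ s ≤ 1} and U₀(r,1) = 0 for all r ∈ (b,1]. Then U and Ũ coincide: for every s ∈ (b,1], U(r,s) = Ũ(r,s) for a.e. r ∈ (b,s). -/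
/-!
Put `D = U - Ũ`; the common `f` cancels, so `D = U₀ - Ũ₀` is continuous on the triangle and
vanishes at `s = 1`. Fix `r₀ > b` and let `M σ` be the supremum of `|D|` over the part of
`{r₀ ≤ r ≤ s ≤ 1}` with `s ≥ σ`. Subtracting the two integral equations and writing
`U U - Ũ Ũ = D U + Ũ D`, the inner integrals differ at height `y` by at most `K · M y`: the
continuous parts of `U`, `Ũ` are bounded on this compact set, and the `L¹` part `f(r y / y₁)` is
handled by the substitution `y₁ ↦ r y / y₁`, an involution of `(r, y)` with Jacobian at most
`1 / r₀`. Letting `s₁ → 1` gives `M σ ≤ K ∫_σ^1 M`, and iterating this Gronwall inequality gives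
`M σ ≤ 2C (K (1 - σ))ⁿ / n!`, so `M = 0`.
-/

open MeasureTheory Real Set
open scoped ENNReal

noncomputable section

/-- The triangle `{(r,s) : b < r ≤ s ≤ 1}`. -/
def triangleU (b : ℝ) : Set (ℝ × ℝ) := {p : ℝ × ℝ | b < p.1 ∧ p.1 ≤ p.2 ∧ p.2 ≤ 1}

/-- Absolute convergence of the iterated integrals appearing in the integral equation
for `U`. -/
def UEqnIntegrable (b : ℝ) (U : ℝ → ℝ → ℝ) : Prop :=
  ∀ r s₂ s₁ : ℝ, b < r → r < s₂ → s₂ < s₁ → s₁ < 1 →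
    (∀ y₂ ∈ Set.Icc s₂ s₁,
      IntervalIntegrable (fun y₁ => U y₁ y₂ * U (r * y₂ / y₁) y₂ / y₁) volume r y₂) ∧
    IntervalIntegrable
      (fun y₂ => y₂ * ∫ y₁ in r..y₂, U y₁ y₂ * U (r * y₂ / y₁) y₂ / y₁) volume s₂ s₁

/-- `U` satisfies the integral equation
`U(r,s₂) = U(r,s₁) + ∫_{s₂}^{s₁} y₂ (∫_r^{y₂} U(y₁,y₂) U(r·y₂/y₁,y₂) dy₁/y₁) dy₂`
for all `b < r < s₂ < s₁ < 1`. -/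
def UEqnHolds (b : ℝ) (U : ℝ → ℝ → ℝ) : Prop :=
  ∀ r s₂ s₁ : ℝ, b < r → r < s₂ → s₂ < s₁ → s₁ < 1 →
    U r s₂ = U r s₁ +
      ∫ y₂ in s₂..s₁, y₂ * ∫ y₁ in r..y₂, U y₁ y₂ * U (r * y₂ / y₁) y₂ / y₁

/-- `U(r,s) = f(r) + U₀(r,s)` on the triangle, with `U₀` continuous there and
`U₀(·,1) = 0`. -/
def UDecomp (b : ℝ) (f : ℝ → ℝ) (U : ℝ → ℝ → ℝ) : Prop :=
  ∃ U₀ : ℝ → ℝ → ℝ,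
    ContinuousOn (fun p : ℝ × ℝ => U₀ p.1 p.2) (triangleU b) ∧
    (∀ r ∈ Set.Ioc b 1, U₀ r 1 = 0) ∧
    ∀ r s : ℝ, b < r → r ≤ s → s ≤ 1 → U r s = f r + U₀ r s

section ReciprocalSubstitution

variable {E : Type*} [NormedAddCommGroup E] [NormedSpace ℝ E] {a c : ℝ}

theorem leftInvOn_mul_div_Ioo (ha : 0 < a) :
    LeftInvOn (fun t => a * c / t) (fun t => a * c / t) (Ioo a c) := by
  rintro t ⟨hat, htc⟩
  have : t ≠ 0 := by linarith
  have : c ≠ 0 := by linarith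
  field_simp

theorem mapsTo_mul_div_Ioo (ha : 0 < a) :
    MapsTo (fun t => a * c / t) (Ioo a c) (Ioo a c) := by
  rintro t ⟨hat, htc⟩
  have ht : 0 < t := ha.trans hat
  constructor
  · rw [lt_div_iff₀ ht]; nlinarith
  · rw [div_lt_iff₀ ht]; nlinarith

theorem image_mul_div_Ioo (ha : 0 < a) : (fun t => a * c / t) '' Ioo a c = Ioo a c :=
  (mapsTo_mul_div_Ioo ha).image_subset.antisymm fun t ht =>
    ⟨a * c / t, mapsTo_mul_div_Ioo ha ht, leftInvOn_mul_div_Ioo ha ht⟩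

theorem hasDerivWithinAt_mul_div_Ioo (ha : 0 < a) {t : ℝ} (ht : t ∈ Ioo a c) :
    HasDerivWithinAt (fun t => a * c / t) (-(a * c / t ^ 2)) (Ioo a c) t := by
  simpa [div_eq_mul_inv] using
    ((hasDerivAt_inv (ha.trans ht.1).ne').const_mul (a * c)).hasDerivWithinAt

theorem abs_neg_mul_div_sq (ha : 0 < a) {t : ℝ} (ht : t ∈ Ioo a c) :
    |-(a * c / t ^ 2)| = a * c / t ^ 2 := by
  have ht₀ : 0 < t := ha.trans ht.1
  have hc : 0 < c := ht₀.trans ht.2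
  rw [abs_neg, abs_of_pos (by positivity)]

theorem integral_comp_mul_div_Ioo (ha : 0 < a) (g : ℝ → E) :
    ∫ t in Ioo a c, g (a * c / t) = ∫ t in Ioo a c, (a * c / t ^ 2) • g t := by
  conv_lhs => rw [← image_mul_div_Ioo ha]
  rw [integral_image_eq_integral_abs_deriv_smul measurableSet_Ioo
    (fun _ => hasDerivWithinAt_mul_div_Ioo ha) (leftInvOn_mul_div_Ioo ha).injOn]
  refine setIntegral_congr_fun measurableSet_Ioo fun t ht => ?_
  simp only [abs_neg_mul_div_sq ha ht, leftInvOn_mul_div_Ioo ha ht]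

theorem integrableOn_mul_div_sq_smul_Ioo (ha : 0 < a) {g : ℝ → E}
    (hg : IntegrableOn g (Ioo a c)) :
    IntegrableOn (fun t => (a * c / t ^ 2) • g t) (Ioo a c) :=
  hg.continuousOn_smul_of_subset
    (continuousOn_const.div (continuousOn_id.pow 2) fun _ ht =>
      pow_ne_zero 2 (ha.trans_le ht.1).ne')
    isCompact_Icc measurableSet_Ioo Ioo_subset_Icc_self

theorem integrableOn_comp_mul_div_Ioo (ha : 0 < a) {g : ℝ → E}
    (hg : IntegrableOn g (Ioo a c)) : IntegrableOn (fun t => g (a * c / t)) (Ioo a c) := by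
  rw [← image_mul_div_Ioo ha, integrableOn_image_iff_integrableOn_abs_deriv_smul
    measurableSet_Ioo (fun _ => hasDerivWithinAt_mul_div_Ioo ha) (leftInvOn_mul_div_Ioo ha).injOn]
  refine (integrableOn_mul_div_sq_smul_Ioo ha hg).congr_fun (fun t ht => ?_) measurableSet_Ioo
  simp only [abs_neg_mul_div_sq ha ht, leftInvOn_mul_div_Ioo ha ht]

theorem setIntegral_comp_mul_div_Ioo_le (ha : 0 < a) {g : ℝ → ℝ}
    (hg : IntegrableOn g (Ioo a c)) (hg₀ : ∀ t ∈ Ioo a c, 0 ≤ g t) :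
    ∫ t in Ioo a c, g (a * c / t) ≤ c / a * ∫ t in Ioo a c, g t := by
  rw [integral_comp_mul_div_Ioo ha, ← integral_const_mul]
  refine setIntegral_mono_on (integrableOn_mul_div_sq_smul_Ioo ha hg) (hg.const_mul _)
    measurableSet_Ioo fun t ht => mul_le_mul_of_nonneg_right ?_ (hg₀ t ht)
  have hat : a ≤ t := ht.1.le
  have ht₀ : 0 < t := ha.trans_le hat
  have hc : 0 < c := ht₀.trans ht.2
  rw [div_le_div_iff₀ (by positivity) ha]
  nlinarith [mul_le_mul hat hat ha.le ht₀.le]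

end ReciprocalSubstitution

section Gronwall

open Nat

theorem mul_integral_mul_pow_div_factorial (B K σ T : ℝ) (n : ℕ) :
    K * ∫ y in σ..T, B * (K * (T - y)) ^ n / n ! = B * (K * (T - σ)) ^ (n + 1) / (n + 1)! := by
  have hpow : ∫ y in σ..T, (T - y) ^ n = (T - σ) ^ (n + 1) / (n + 1) := by
    simp [intervalIntegral.integral_comp_sub_left (fun x => x ^ n) T, integral_pow]
  simp_rw [mul_pow, show ∀ y, B * (K ^ n * (T - y) ^ n) / n ! = B * K ^ n / n ! * (T - y) ^ n
    from fun y => by ring]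
  rw [intervalIntegral.integral_const_mul, hpow, Nat.factorial_succ]
  push_cast
  field_simp
  ring

variable {M : ℝ → ℝ} {a T K B : ℝ}

theorem le_pow_div_factorial_of_le_mul_setIntegral (hK : 0 ≤ K)
    (hM : ∀ σ ∈ Icc a T, IntegrableOn M (Ioc σ T)) (hB : ∀ σ ∈ Icc a T, M σ ≤ B)
    (hrec : ∀ σ ∈ Icc a T, M σ ≤ K * ∫ y in Ioc σ T, M y) (n : ℕ) :
    ∀ σ ∈ Icc a T, M σ ≤ B * (K * (T - σ)) ^ n / n ! := by
  induction n with
  | zero => simpa using hB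
  | succ n ih =>
    intro σ hσ
    calc M σ ≤ K * ∫ y in Ioc σ T, M y := hrec σ hσ
      _ ≤ K * ∫ y in Ioc σ T, B * (K * (T - y)) ^ n / n ! := by
        refine mul_le_mul_of_nonneg_left (setIntegral_mono_on (hM σ hσ)
          (Continuous.integrableOn_Ioc (by fun_prop)) measurableSet_Ioc fun y hy => ?_) hK
        exact ih y ⟨hσ.1.trans hy.1.le, hy.2⟩
      _ = B * (K * (T - σ)) ^ (n + 1) / (n + 1)! := by
        rw [← intervalIntegral.integral_of_le hσ.2, mul_integral_mul_pow_div_factorial]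

theorem eqOn_zero_of_le_mul_setIntegral (hK : 0 ≤ K)
    (hM : ∀ σ ∈ Icc a T, IntegrableOn M (Ioc σ T)) (hM₀ : ∀ σ ∈ Icc a T, 0 ≤ M σ)
    (hB : ∀ σ ∈ Icc a T, M σ ≤ B) (hrec : ∀ σ ∈ Icc a T, M σ ≤ K * ∫ y in Ioc σ T, M y) :
    EqOn M 0 (Icc a T) := by
  intro σ hσ
  have hlim := (FloorSemiring.tendsto_pow_div_factorial_atTop (K * (T - σ))).const_mul B
  rw [mul_zero] at hlim
  refine le_antisymm (ge_of_tendsto hlim (Filter.Eventually.of_forall fun n => ?_)) (hM₀ σ hσ)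
  simpa [mul_div_assoc] using le_pow_div_factorial_of_le_mul_setIntegral hK hM hB hrec n σ hσ

end Gronwall

section TailSup

variable {D : ℝ → ℝ → ℝ} {S : Set (ℝ × ℝ)} {B σ : ℝ} {p : ℝ × ℝ}

def tailSup (D : ℝ → ℝ → ℝ) (S : Set (ℝ × ℝ)) (σ : ℝ) : ℝ :=
  sSup ((fun p : ℝ × ℝ => |D p.1 p.2|) '' {p ∈ S | σ ≤ p.2})

theorem tailSup_nonneg : 0 ≤ tailSup D S σ :=
  Real.sSup_nonneg <| forall_mem_image.2 fun _ _ => abs_nonneg _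

theorem tailSup_le {c : ℝ} (hc : 0 ≤ c) (h : ∀ p ∈ S, σ ≤ p.2 → |D p.1 p.2| ≤ c) :
    tailSup D S σ ≤ c :=
  Real.sSup_le (forall_mem_image.2 fun p hp => h p hp.1 hp.2) hc

theorem abs_le_tailSup (hB : ∀ p ∈ S, |D p.1 p.2| ≤ B) (hp : p ∈ S) (hσ : σ ≤ p.2) :
    |D p.1 p.2| ≤ tailSup D S σ :=
  le_csSup ⟨B, forall_mem_image.2 fun q hq => hB q hq.1⟩ (mem_image_of_mem _ ⟨hp, hσ⟩)

theorem antitone_tailSup (hB : ∀ p ∈ S, |D p.1 p.2| ≤ B) : Antitone (tailSup D S) :=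
  fun _ _ hστ => tailSup_le tailSup_nonneg fun _ hp hτ => abs_le_tailSup hB hp (hστ.trans hτ)

variable {y C : ℝ} {f : ℝ → ℝ} {U U' : ℝ → ℝ → ℝ}

theorem abs_sub_le_two_mul (hUC : ∀ p ∈ S, |U p.1 p.2 - f p.1| ≤ C)
    (hU'C : ∀ p ∈ S, |U' p.1 p.2 - f p.1| ≤ C) :
    ∀ p ∈ S, |(U - U') p.1 p.2| ≤ 2 * C := fun p hp => by
  rw [Pi.sub_apply, Pi.sub_apply, ← sub_sub_sub_cancel_right _ _ (f p.1), two_mul]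
  exact (abs_sub _ _).trans (add_le_add (hUC p hp) (hU'C p hp))

theorem abs_le_abs_add_of_abs_sub_le (hUC : ∀ p ∈ S, |U p.1 p.2 - f p.1| ≤ C)
    (hp : p ∈ S) : |U p.1 p.2| ≤ |f p.1| + C := by
  linarith [abs_sub_abs_le_abs_sub (U p.1 p.2) (f p.1), hUC p hp]

theorem abs_mul_sub_mul_le_tailSup (hUC : ∀ p ∈ S, |U p.1 p.2 - f p.1| ≤ C)
    (hU'C : ∀ p ∈ S, |U' p.1 p.2 - f p.1| ≤ C) {x z : ℝ} (hx : (x, y) ∈ S) (hz : (z, y) ∈ S) :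
    |U x y * U z y - U' x y * U' z y| ≤ tailSup (U - U') S y * (|f x| + |f z| + 2 * C) := by
  have hC : 0 ≤ C := (abs_nonneg _).trans (hUC _ hx)
  have hx' := abs_le_tailSup (abs_sub_le_two_mul hUC hU'C) hx le_rfl
  have hz' := abs_le_tailSup (abs_sub_le_two_mul hUC hU'C) hz le_rfl
  simp only [Pi.sub_apply] at hx' hz'
  calc |U x y * U z y - U' x y * U' z y|
      = |(U x y - U' x y) * U z y + U' x y * (U z y - U' z y)| := by ring_nf
    _ ≤ |U x y - U' x y| * |U z y| + |U' x y| * |U z y - U' z y| := by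
      rw [← abs_mul, ← abs_mul]; exact abs_add_le _ _
    _ ≤ tailSup (U - U') S y * (|f z| + C) + (|f x| + C) * tailSup (U - U') S y :=
      add_le_add
        (mul_le_mul hx' (abs_le_abs_add_of_abs_sub_le hUC hz) (abs_nonneg _) tailSup_nonneg)
        (mul_le_mul (abs_le_abs_add_of_abs_sub_le hU'C hx) hz' (abs_nonneg _) (by positivity))
    _ = _ := by ring

end TailSup

def closedTriangle (a : ℝ) : Set (ℝ × ℝ) := {p : ℝ × ℝ | a ≤ p.1 ∧ p.1 ≤ p.2 ∧ p.2 ≤ 1}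

theorem isCompact_closedTriangle (a : ℝ) : IsCompact (closedTriangle a) :=
  (isCompact_Icc.prod isCompact_Icc).of_isClosed_subset
    ((isClosed_le continuous_const continuous_fst).inter
      ((isClosed_le continuous_fst continuous_snd).inter
        (isClosed_le continuous_snd continuous_const)))
    fun _ ⟨h₁, h₂, h₃⟩ => ⟨⟨h₁, h₂.trans h₃⟩, ⟨h₁.trans h₂, h₃⟩⟩

theorem closedTriangle_subset_triangleU {a b : ℝ} (hba : b < a) :
    closedTriangle a ⊆ triangleU b :=
  fun _ ⟨h₁, h₂, h₃⟩ => ⟨hba.trans_le h₁, h₂, h₃⟩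

def kernelIntegral (U : ℝ → ℝ → ℝ) (r y : ℝ) : ℝ := ∫ t in r..y, U t y * U (r * y / t) y / t

/-- The three summands bound the integrals over `(ρ, y)` of `|f (y₁)|`, `|f (ρ y / y₁)|` and `2C`
in the proof of `abs_kernelIntegral_sub_le`; the outer `1 / r₀` bounds the factor `1 / y₁`. -/
def kernelConst (f : ℝ → ℝ) (r₀ C : ℝ) : ℝ :=
  ((∫ x in Ioc r₀ 1, |f x|) + (∫ x in Ioc r₀ 1, |f x|) / r₀ + 2 * C) / r₀

section Uniqueness

variable {b r₀ ρ y C : ℝ} {f : ℝ → ℝ} {U U' : ℝ → ℝ → ℝ}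

theorem kernelConst_nonneg (hr₀ : 0 < r₀) (hC : 0 ≤ C) : 0 ≤ kernelConst f r₀ C := by
  have : 0 ≤ ∫ x in Ioc r₀ 1, |f x| :=
    setIntegral_nonneg measurableSet_Ioc fun _ _ => abs_nonneg _
  unfold kernelConst
  positivity

theorem integrableOn_abs_comp_mul_div (hr₀ : 0 < r₀) (hf : IntegrableOn f (Ioc r₀ 1))
    (hρ : r₀ ≤ ρ) (hy : y ≤ 1) : IntegrableOn (fun t => |f (ρ * y / t)|) (Ioc ρ y) := by
  rw [integrableOn_Ioc_iff_integrableOn_Ioo]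
  exact integrableOn_comp_mul_div_Ioo (hr₀.trans_le hρ)
    (hf.mono_set fun t ht => ⟨hρ.trans_lt ht.1, ht.2.le.trans hy⟩).abs

theorem setIntegral_abs_comp_mul_div_le (hr₀ : 0 < r₀) (hf : IntegrableOn f (Ioc r₀ 1))
    (hρ : r₀ ≤ ρ) (hy : y ≤ 1) :
    ∫ t in Ioc ρ y, |f (ρ * y / t)| ≤ (∫ x in Ioc r₀ 1, |f x|) / r₀ := by
  have hsub : Ioo ρ y ⊆ Ioc r₀ 1 := fun t ht => ⟨hρ.trans_lt ht.1, ht.2.le.trans hy⟩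
  rw [integral_Ioc_eq_integral_Ioo]
  calc ∫ t in Ioo ρ y, |f (ρ * y / t)|
      ≤ y / ρ * ∫ t in Ioo ρ y, |f t| :=
        setIntegral_comp_mul_div_Ioo_le (hr₀.trans_le hρ) (hf.mono_set hsub).abs
          fun _ _ => abs_nonneg _
    _ ≤ 1 / r₀ * ∫ x in Ioc r₀ 1, |f x| :=
        mul_le_mul (div_le_div₀ zero_le_one hy hr₀ hρ)
          (setIntegral_mono_set hf.abs (ae_of_all _ fun _ => abs_nonneg _) hsub.eventuallyLE)
          (setIntegral_nonneg measurableSet_Ioo fun _ _ => abs_nonneg _) (by positivity)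
    _ = _ := by ring

theorem abs_kernelIntegral_sub_le (hr₀ : 0 < r₀) (hf : IntegrableOn f (Ioc r₀ 1))
    (hUC : ∀ p ∈ closedTriangle r₀, |U p.1 p.2 - f p.1| ≤ C)
    (hU'C : ∀ p ∈ closedTriangle r₀, |U' p.1 p.2 - f p.1| ≤ C)
    (hρ : r₀ ≤ ρ) (hρy : ρ ≤ y) (hy : y ≤ 1)
    (hI : IntervalIntegrable (fun t => U t y * U (ρ * y / t) y / t) volume ρ y)
    (hI' : IntervalIntegrable (fun t => U' t y * U' (ρ * y / t) y / t) volume ρ y) :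
    |kernelIntegral U ρ y - kernelIntegral U' ρ y| ≤
      kernelConst f r₀ C * tailSup (U - U') (closedTriangle r₀) y := by
  set M := tailSup (U - U') (closedTriangle r₀)
  have hC : 0 ≤ C := (abs_nonneg _).trans (hUC (ρ, y) ⟨hρ, hρy, hy⟩)
  set g : ℝ → ℝ := fun t => (|f t| + |f (ρ * y / t)| + 2 * C) / r₀
  have hf₁ : IntegrableOn (fun t => |f t|) (Ioc ρ y) := (hf.mono_set (Ioc_subset_Ioc hρ hy)).abs
  have hf₂ := integrableOn_abs_comp_mul_div hr₀ hf hρ hy (y := y)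
  have hf₁₂ : IntegrableOn (fun t => |f t| + |f (ρ * y / t)|) (Ioc ρ y) := hf₁.add hf₂
  have hconst : IntegrableOn (fun _ => 2 * C) (Ioc ρ y) := integrableOn_const measure_Ioc_lt_top.ne
  have hg : IntegrableOn g (Ioc ρ y) := (hf₁₂.add hconst).div_const r₀
  have hg_le : ∫ t in Ioc ρ y, g t ≤ kernelConst f r₀ C := by
    rw [integral_div, integral_add hf₁₂ hconst, integral_add hf₁ hf₂, setIntegral_const,
      Real.volume_real_Ioc_of_le hρy, smul_eq_mul, kernelConst]
    have h₁ : ∫ t in Ioc ρ y, |f t| ≤ ∫ x in Ioc r₀ 1, |f x| :=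
      setIntegral_mono_set hf.abs (ae_of_all _ fun _ => abs_nonneg _)
        (Ioc_subset_Ioc hρ hy).eventuallyLE
    have h₂ := setIntegral_abs_comp_mul_div_le hr₀ hf hρ hy
    have h₃ : (y - ρ) * (2 * C) ≤ 2 * C := by nlinarith
    exact div_le_div_of_nonneg_right (by linarith) hr₀.le
  have hpt : ∀ t ∈ Ioc ρ y,
      ‖U t y * U (ρ * y / t) y / t - U' t y * U' (ρ * y / t) y / t‖ ≤ M y * g t := by
    rintro t ⟨hρt, hty⟩
    have ht₀ : 0 < t := (hr₀.trans_le hρ).trans hρt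
    have hz : ρ ≤ ρ * y / t ∧ ρ * y / t ≤ y := by
      constructor
      · rw [le_div_iff₀ ht₀]; nlinarith
      · rw [div_le_iff₀ ht₀]; nlinarith
    have hkey := abs_mul_sub_mul_le_tailSup hUC hU'C (x := t) (z := ρ * y / t)
      ⟨hρ.trans hρt.le, hty, hy⟩ ⟨hρ.trans hz.1, hz.2, hy⟩
    rw [Real.norm_eq_abs, ← sub_div, abs_div, abs_of_pos ht₀, mul_div_assoc']
    exact (div_le_div_of_nonneg_right hkey ht₀.le).trans <|
      div_le_div_of_nonneg_left (mul_nonneg tailSup_nonneg (by positivity)) hr₀ (hρ.trans hρt.le)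
  calc |kernelIntegral U ρ y - kernelIntegral U' ρ y|
      = ‖∫ t in ρ..y, (U t y * U (ρ * y / t) y / t - U' t y * U' (ρ * y / t) y / t)‖ := by
        rw [kernelIntegral, kernelIntegral, intervalIntegral.integral_sub hI hI', Real.norm_eq_abs]
    _ ≤ ∫ t in ρ..y, M y * g t :=
        intervalIntegral.norm_integral_le_of_norm_le hρy (ae_of_all _ hpt)
          ((intervalIntegrable_iff_integrableOn_Ioc_of_le hρy).2 (hg.const_mul _))
    _ = M y * ∫ t in Ioc ρ y, g t := by
        rw [intervalIntegral.integral_of_le hρy, integral_const_mul]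
    _ ≤ M y * kernelConst f r₀ C := mul_le_mul_of_nonneg_left hg_le tailSup_nonneg
    _ = _ := mul_comm _ _

theorem abs_sub_le_abs_sub_add_setIntegral_tailSup (hbr : b < r₀) (hr₀ : 0 < r₀)
    (hf : IntegrableOn f (Ioc r₀ 1))
    (hUC : ∀ p ∈ closedTriangle r₀, |U p.1 p.2 - f p.1| ≤ C)
    (hU'C : ∀ p ∈ closedTriangle r₀, |U' p.1 p.2 - f p.1| ≤ C)
    (hUint : UEqnIntegrable b U) (hU'int : UEqnIntegrable b U')
    (hUeq : UEqnHolds b U) (hU'eq : UEqnHolds b U')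
    {s₂ s₁ : ℝ} (hρ : r₀ ≤ ρ) (hρs₂ : ρ < s₂) (hs₂₁ : s₂ < s₁) (hs₁ : s₁ < 1) :
    |(U - U') ρ s₂| ≤ |(U - U') ρ s₁| +
      kernelConst f r₀ C * ∫ y in Ioc s₂ 1, tailSup (U - U') (closedTriangle r₀) y := by
  set M := tailSup (U - U') (closedTriangle r₀)
  set K := kernelConst f r₀ C
  have hbρ : b < ρ := hbr.trans_le hρ
  have hK : 0 ≤ K :=
    kernelConst_nonneg hr₀ ((abs_nonneg _).trans (hUC (ρ, s₂) ⟨hρ, hρs₂.le, by linarith⟩))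
  have hM : IntegrableOn M (Ioc s₂ 1) :=
    (antitone_tailSup (abs_sub_le_two_mul hUC hU'C)).intervalIntegrable.1
  obtain ⟨hI, hO⟩ := hUint ρ s₂ s₁ hbρ hρs₂ hs₂₁ hs₁
  obtain ⟨hI', hO'⟩ := hU'int ρ s₂ s₁ hbρ hρs₂ hs₂₁ hs₁
  have hdiff : (U - U') ρ s₂ = (U - U') ρ s₁ +
      ∫ y in s₂..s₁, (y * kernelIntegral U ρ y - y * kernelIntegral U' ρ y) := by
    simp only [Pi.sub_apply, kernelIntegral]
    rw [hUeq ρ s₂ s₁ hbρ hρs₂ hs₂₁ hs₁, hU'eq ρ s₂ s₁ hbρ hρs₂ hs₂₁ hs₁,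
      intervalIntegral.integral_sub hO hO']
    ring
  have hpt : ∀ y ∈ Ioc s₂ s₁,
      ‖y * kernelIntegral U ρ y - y * kernelIntegral U' ρ y‖ ≤ K * M y := by
    rintro y ⟨hs₂y, hys₁⟩
    rw [Real.norm_eq_abs, ← mul_sub, abs_mul, abs_of_pos (by linarith)]
    exact (mul_le_of_le_one_left (abs_nonneg _) (by linarith)).trans
      (abs_kernelIntegral_sub_le hr₀ hf hUC hU'C hρ (by linarith) (by linarith)
        (hI y ⟨hs₂y.le, hys₁⟩) (hI' y ⟨hs₂y.le, hys₁⟩))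
  calc |(U - U') ρ s₂|
      ≤ |(U - U') ρ s₁| +
          ‖∫ y in s₂..s₁, (y * kernelIntegral U ρ y - y * kernelIntegral U' ρ y)‖ :=
        hdiff ▸ abs_add_le _ _
    _ ≤ |(U - U') ρ s₁| + ∫ y in s₂..s₁, K * M y := by
        gcongr
        exact intervalIntegral.norm_integral_le_of_norm_le hs₂₁.le (ae_of_all _ hpt)
          ((intervalIntegrable_iff_integrableOn_Ioc_of_le hs₂₁.le).2
            ((hM.mono_set (Ioc_subset_Ioc_right hs₁.le)).const_mul K))
    _ ≤ |(U - U') ρ s₁| + K * ∫ y in Ioc s₂ 1, M y := by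
        rw [intervalIntegral.integral_of_le hs₂₁.le, integral_const_mul]
        gcongr |(U - U') ρ s₁| + K * ?_
        exact setIntegral_mono_set hM (ae_of_all _ fun _ => tailSup_nonneg)
          (Ioc_subset_Ioc_right hs₁.le).eventuallyLE

theorem abs_sub_le_kernelConst_mul_setIntegral_tailSup (hbr : b < r₀) (hr₀ : 0 < r₀)
    (hf : IntegrableOn f (Ioc r₀ 1))
    (hUC : ∀ p ∈ closedTriangle r₀, |U p.1 p.2 - f p.1| ≤ C)
    (hU'C : ∀ p ∈ closedTriangle r₀, |U' p.1 p.2 - f p.1| ≤ C)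
    (hUint : UEqnIntegrable b U) (hU'int : UEqnIntegrable b U')
    (hUeq : UEqnHolds b U) (hU'eq : UEqnHolds b U')
    (hcont : ContinuousOn (fun p : ℝ × ℝ => (U - U') p.1 p.2) (closedTriangle r₀))
    (hone : ∀ ρ ∈ Icc r₀ 1, U ρ 1 = U' ρ 1) {p : ℝ × ℝ} {σ : ℝ}
    (hp : p ∈ closedTriangle r₀) (hσ : σ ≤ p.2) :
    |(U - U') p.1 p.2| ≤
      kernelConst f r₀ C * ∫ y in Ioc σ 1, tailSup (U - U') (closedTriangle r₀) y := by
  obtain ⟨ρ, τ⟩ := p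
  obtain ⟨hρ, hρτ, hτ⟩ := hp
  set M := tailSup (U - U') (closedTriangle r₀)
  set G : ℝ → ℝ := fun σ => kernelConst f r₀ C * ∫ y in Ioc σ 1, M y
  have hK : 0 ≤ kernelConst f r₀ C :=
    kernelConst_nonneg hr₀ ((abs_nonneg _).trans (hUC (ρ, τ) ⟨hρ, hρτ, hτ⟩))
  have hG : Antitone G := fun s s' hss' =>
    mul_le_mul_of_nonneg_left (setIntegral_mono_set
      (antitone_tailSup (abs_sub_le_two_mul hUC hU'C)).intervalIntegrable.1
      (ae_of_all _ fun _ => tailSup_nonneg) (Ioc_subset_Ioc_left hss').eventuallyLE) hK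
  have hone' : U ρ 1 = U' ρ 1 := hone ρ ⟨hρ, hρτ.trans hτ⟩
  have hline : ContinuousOn (fun s => |(U - U') ρ s|) (Icc ρ 1) :=
    (hcont.comp (continuous_const.prodMk continuous_id).continuousOn
      fun s hs => ⟨hρ, hs.1, hs.2⟩).abs
  have hinterior : ∀ s ∈ Ioo ρ 1, |(U - U') ρ s| ≤ G s := by
    rintro s₂ ⟨hρs₂, hs₂⟩
    have h := ContinuousWithinAt.closure_le (f := fun _ => |(U - U') ρ s₂|)
      (g := fun s₁ => |(U - U') ρ s₁| + G s₂) (s := Ioo s₂ 1) (x := 1)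
      (by rw [closure_Ioo hs₂.ne]; exact right_mem_Icc.2 hs₂.le) continuousWithinAt_const
      (((hline 1 (right_mem_Icc.2 (hρs₂.trans hs₂).le)).mono
        (Ioo_subset_Icc_self.trans (Icc_subset_Icc_left hρs₂.le))).add continuousWithinAt_const)
      fun s₁ hs₁ => abs_sub_le_abs_sub_add_setIntegral_tailSup hbr hr₀ hf hUC hU'C hUint
        hU'int hUeq hU'eq hρ hρs₂ hs₁.1 hs₁.2
    simpa [hone'] using h
  rcases hτ.eq_or_lt with rfl | hτ
  · simpa [hone'] using
      mul_nonneg hK (setIntegral_nonneg measurableSet_Ioc fun _ _ => tailSup_nonneg)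
  -- `(ρ, τ)` is a limit of points `(ρ, s)` with `max ρ σ < s < 1`, where `hinterior` applies.
  have hmax : max ρ σ < 1 := max_lt (hρτ.trans_lt hτ) (hσ.trans_lt hτ)
  refine ContinuousWithinAt.closure_le (f := fun s => |(U - U') ρ s|) (g := fun _ => G σ)
    (s := Ioo (max ρ σ) 1) (x := τ)
    (by rw [closure_Ioo hmax.ne]; exact ⟨max_le hρτ hσ, hτ.le⟩)
    ((hline τ ⟨hρτ, hτ.le⟩).mono
      (Ioo_subset_Icc_self.trans (Icc_subset_Icc_left (le_max_left _ _))))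
    continuousWithinAt_const fun s hs => ?_
  exact (hinterior s ⟨(le_max_left _ _).trans_lt hs.1, hs.2⟩).trans
    (hG ((le_max_right _ _).trans hs.1.le))

theorem eq_of_mem_closedTriangle (hbr : b < r₀) (hr₀ : 0 < r₀) (hf : IntegrableOn f (Ioc r₀ 1))
    (hUC : ∀ p ∈ closedTriangle r₀, |U p.1 p.2 - f p.1| ≤ C)
    (hU'C : ∀ p ∈ closedTriangle r₀, |U' p.1 p.2 - f p.1| ≤ C)
    (hUint : UEqnIntegrable b U) (hU'int : UEqnIntegrable b U')
    (hUeq : UEqnHolds b U) (hU'eq : UEqnHolds b U')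
    (hcont : ContinuousOn (fun p : ℝ × ℝ => (U - U') p.1 p.2) (closedTriangle r₀))
    (hone : ∀ ρ ∈ Icc r₀ 1, U ρ 1 = U' ρ 1) {p : ℝ × ℝ} (hp : p ∈ closedTriangle r₀) :
    U p.1 p.2 = U' p.1 p.2 := by
  have hC : 0 ≤ C := (abs_nonneg _).trans (hUC p hp)
  have hK : 0 ≤ kernelConst f r₀ C := kernelConst_nonneg hr₀ hC
  have hbound := abs_sub_le_two_mul hUC hU'C
  have hzero : EqOn (tailSup (U - U') (closedTriangle r₀)) 0 (Icc r₀ 1) :=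
    eqOn_zero_of_le_mul_setIntegral hK
      (fun _ _ => (antitone_tailSup hbound).intervalIntegrable.1)
      (fun _ _ => tailSup_nonneg)
      (fun _ _ => tailSup_le (by positivity) fun q hq _ => hbound q hq)
      fun _ _ => tailSup_le
        (mul_nonneg hK (setIntegral_nonneg measurableSet_Ioc fun _ _ => tailSup_nonneg))
        fun _ hq hσ => abs_sub_le_kernelConst_mul_setIntegral_tailSup hbr hr₀ hf hUC hU'C hUint
          hU'int hUeq hU'eq hcont hone hq hσ
  have h := abs_le_tailSup hbound hp le_rfl
  rwa [hzero ⟨hp.1.trans hp.2.1, hp.2.2⟩, Pi.zero_apply, abs_nonpos_iff, Pi.sub_apply,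
    Pi.sub_apply, sub_eq_zero] at h

theorem UDecomp.exists_abs_sub_le (hU : UDecomp b f U) (hbr : b < r₀) :
    ∃ C, ∀ p ∈ closedTriangle r₀, |U p.1 p.2 - f p.1| ≤ C := by
  obtain ⟨V, hVc, -, hV⟩ := hU
  obtain ⟨C, hC⟩ := (isCompact_closedTriangle r₀).exists_bound_of_continuousOn
    (hVc.mono (closedTriangle_subset_triangleU hbr))
  refine ⟨C, fun p hp => ?_⟩
  have hp' := closedTriangle_subset_triangleU hbr hp
  rw [hV p.1 p.2 hp'.1 hp'.2.1 hp'.2.2, add_sub_cancel_left]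
  exact hC p hp

theorem UDecomp.continuousOn_sub (hU : UDecomp b f U) (hU' : UDecomp b f U') :
    ContinuousOn (fun p : ℝ × ℝ => (U - U') p.1 p.2) (triangleU b) := by
  obtain ⟨V, hVc, -, hV⟩ := hU
  obtain ⟨W, hWc, -, hW⟩ := hU'
  refine (hVc.sub hWc).congr fun p hp => ?_
  simp only [Pi.sub_apply, hV p.1 p.2 hp.1 hp.2.1 hp.2.2, hW p.1 p.2 hp.1 hp.2.1 hp.2.2]
  ring

theorem UDecomp.eq_at_one (hU : UDecomp b f U) (hU' : UDecomp b f U') (hρ : ρ ∈ Ioc b 1) :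
    U ρ 1 = U' ρ 1 := by
  obtain ⟨V, -, hV₁, hV⟩ := hU
  obtain ⟨W, -, hW₁, hW⟩ := hU'
  rw [hV ρ 1 hρ.1 hρ.2 le_rfl, hW ρ 1 hρ.1 hρ.2 le_rfl, hV₁ ρ hρ, hW₁ ρ hρ]

end Uniqueness

theorem statement11_general (b : ℝ) (hb : b ∈ Set.Ioo (0:ℝ) 1) (f : ℝ → ℝ)
    (hf : IntegrableOn f (Set.Ioo b 1))
    (U U' : ℝ → ℝ → ℝ)
    (hUint : UEqnIntegrable b U) (hU'int : UEqnIntegrable b U')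
    (hUeq : UEqnHolds b U) (hU'eq : UEqnHolds b U')
    (hUdec : UDecomp b f U) (hU'dec : UDecomp b f U') :
    ∀ s ∈ Set.Ioc b 1,
      ∀ᵐ r ∂(volume.restrict (Set.Ioo b s)), U r s = U' r s := by
  intro s hs
  filter_upwards [ae_restrict_mem measurableSet_Ioo] with r ⟨hbr, hrs⟩
  obtain ⟨C, hC⟩ := hUdec.exists_abs_sub_le hbr
  obtain ⟨C', hC'⟩ := hU'dec.exists_abs_sub_le hbr
  have hf' : IntegrableOn f (Ioc r 1) :=
    (integrableOn_Ioc_iff_integrableOn_Ioo (by finiteness)).2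
      (hf.mono_set (Ioo_subset_Ioo_left hbr.le))
  exact eq_of_mem_closedTriangle (C := max C C') (p := (r, s)) hbr (hb.1.trans hbr) hf'
    (fun p hp => (hC p hp).trans (le_max_left _ _))
    (fun p hp => (hC' p hp).trans (le_max_right _ _))
    hUint hU'int hUeq hU'eq
    ((hUdec.continuousOn_sub hU'dec).mono (closedTriangle_subset_triangleU hbr))
    (fun ρ hρ => hUdec.eq_at_one hU'dec ⟨hbr.trans_le hρ.1, hρ.2⟩) ⟨le_rfl, hrs.le, hs.2⟩

/-- Lemma 4.6 of the paper. Let `b ∈ (0,1)` and `f ∈ L¹(b,1)`. Two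
measurable solutions of the integral equation on `{b < r ≤ s ≤ 1}` which are continuous
perturbations `f(r) + U₀(r,s)` of `f` with `U₀(·,1) = 0` coincide: for every `s ∈ (b,1]`,
`U(r,s) = Ũ(r,s)` for a.e. `r ∈ (b,s)`. -/
theorem statement11 (b : ℝ) (hb : b ∈ Set.Ioo (0:ℝ) 1) (f : ℝ → ℝ)
    (hf : IntegrableOn f (Set.Ioo b 1))
    (U U' : ℝ → ℝ → ℝ)
    (hUm : Measurable ((triangleU b).indicator (Function.uncurry fun r s => U r s)))
    (hU'm : Measurable ((triangleU b).indicator (Function.uncurry fun r s => U' r s)))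
    (hUint : UEqnIntegrable b U) (hU'int : UEqnIntegrable b U')
    (hUeq : UEqnHolds b U) (hU'eq : UEqnHolds b U')
    (hUdec : UDecomp b f U) (hU'dec : UDecomp b f U') :
    ∀ s ∈ Set.Ioc b 1,
      ∀ᵐ r ∂(volume.restrict (Set.Ioo b s)), U r s = U' r s :=
  statement11_general b hb f hf U U' hUint hU'int hUeq hU'eq hUdec hU'dec
end
end

section
/- Let Q ∈ L¹((0,∞);ℝ) and let A be a measurable real-valued function on (0,∞) such that |A(t) - Q(t)| ≤ ( ∫₀^t |Q(s)| ds )² · exp( t · ∫₀^t |Q(s)| ds ) for a.e. t > 0. Then for every M > 0 with M ≥ 2 ‖Q‖_{L¹(0,∞)}, one has ∫₀^∞ |A(t)| e^{-Mt} dt ≤ M. -/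
/-!
Since `0 ≤ ∫₀^t |Q| ≤ q := ‖Q‖_{L¹}`, the hypothesis gives `|A t| ≤ |Q t| + q² e^{qt}`. Integrating
against `e^{-Mt}` yields `∫₀^∞ |A| e^{-Mt} ≤ q + q² / (M - q) = qM / (M - q)`, which is at most `M`
exactly when `2q ≤ M`.
-/

open MeasureTheory Real Set
open scoped ENNReal

theorem intervalIntegral_le_integral_Ioi {f : ℝ → ℝ} {a t : ℝ} (hf : IntegrableOn f (Ioi a))
    (hf0 : 0 ≤ᵐ[volume.restrict (Ioi a)] f) (hat : a ≤ t) :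
    ∫ s in a..t, f s ≤ ∫ s in Ioi a, f s := by
  rw [intervalIntegral.integral_of_le hat]
  exact setIntegral_mono_set hf hf0 Ioc_subset_Ioi_self.eventuallyLE

theorem abs_mul_exp_neg_le_of_abs_sub_le {a b F q t : ℝ} (M : ℝ)
    (h : |a - b| ≤ F ^ 2 * exp (t * F)) (hF : 0 ≤ F) (hFq : F ≤ q) (ht : 0 ≤ t) :
    |a| * exp (-M * t) ≤ |b| * exp (-M * t) + q ^ 2 * exp (-(M - q) * t) := by
  have hab : |a| ≤ |b| + q ^ 2 * exp (t * q) := by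
    have hFq' : F ^ 2 * exp (t * F) ≤ q ^ 2 * exp (t * q) := by gcongr
    linarith [abs_sub_abs_le_abs_sub a b]
  calc |a| * exp (-M * t) ≤ (|b| + q ^ 2 * exp (t * q)) * exp (-M * t) := by gcongr
    _ = |b| * exp (-M * t) + q ^ 2 * exp (-(M - q) * t) := by
      rw [add_mul, mul_assoc, ← exp_add]
      ring_nf

theorem lintegral_Ioi_ofReal_mul_exp_neg_le {f : ℝ → ℝ} {M : ℝ} (hf : IntegrableOn f (Ioi 0))
    (hf0 : 0 ≤ᵐ[volume.restrict (Ioi 0)] f) (hM : 0 ≤ M) :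
    ∫⁻ t in Ioi 0, ENNReal.ofReal (f t * exp (-M * t)) ≤ ENNReal.ofReal (∫ t in Ioi 0, f t) := by
  rw [ofReal_integral_eq_lintegral_ofReal hf hf0]
  refine lintegral_mono_ae ?_
  filter_upwards [hf0, ae_restrict_mem measurableSet_Ioi] with t hft (ht : 0 < t)
  have hexp : exp (-M * t) ≤ 1 := exp_le_one_iff.mpr (by nlinarith)
  exact ENNReal.ofReal_le_ofReal (mul_le_of_le_one_right hft hexp)

theorem lintegral_Ioi_ofReal_mul_exp_neg_mul {b c : ℝ} (hb : 0 < b) (hc : 0 ≤ c) :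
    ∫⁻ t in Ioi 0, ENNReal.ofReal (c * exp (-b * t)) = ENNReal.ofReal (c / b) := by
  have hint : IntegrableOn (fun t => c * exp (-b * t)) (Ioi 0) :=
    (integrableOn_exp_mul_Ioi (neg_lt_zero.mpr hb) 0).const_mul c
  rw [← ofReal_integral_eq_lintegral_ofReal hint (ae_of_all _ fun t => by positivity),
    integral_const_mul, integral_exp_mul_Ioi (neg_lt_zero.mpr hb)]
  congr 1
  simp [div_eq_mul_inv]

theorem add_sq_div_sub_le {q M : ℝ} (hq : 0 ≤ q) (hqM : 2 * q ≤ M) (hM : 0 < M) :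
    q + q ^ 2 / (M - q) ≤ M := by
  have hsq : q ^ 2 / (M - q) ≤ M - q :=
    div_le_of_le_mul₀ (by linarith) (by linarith) (by nlinarith)
  linarith

theorem statement14_general (Q A : ℝ → ℝ)
    (hQ : IntegrableOn Q (Set.Ioi 0))
    (hbound : ∀ᵐ t ∂(volume.restrict (Set.Ioi (0:ℝ))),
      |A t - Q t| ≤ (∫ s in (0:ℝ)..t, |Q s|) ^ 2 *
        Real.exp (t * ∫ s in (0:ℝ)..t, |Q s|))
    (M : ℝ) (hM : 0 < M)
    (hMQ : 2 * ∫ t in Set.Ioi (0:ℝ), |Q t| ≤ M) :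
    (∫⁻ t in Set.Ioi (0:ℝ), ENNReal.ofReal (|A t| * Real.exp (-M * t)))
      ≤ ENNReal.ofReal M := by
  set q := ∫ t in Ioi (0:ℝ), |Q t|
  have habsQ0 : 0 ≤ᵐ[volume.restrict (Ioi 0)] fun t => |Q t| := ae_of_all _ fun t => abs_nonneg _
  have hq0 : 0 ≤ q := integral_nonneg fun t => abs_nonneg _
  have hpt : ∀ᵐ t ∂volume.restrict (Ioi 0), ENNReal.ofReal (|A t| * exp (-M * t)) ≤
      ENNReal.ofReal (|Q t| * exp (-M * t)) + ENNReal.ofReal (q ^ 2 * exp (-(M - q) * t)) := by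
    filter_upwards [hbound, ae_restrict_mem measurableSet_Ioi] with t hAQ (ht : 0 < t)
    rw [← ENNReal.ofReal_add (by positivity) (by positivity)]
    exact ENNReal.ofReal_le_ofReal <| abs_mul_exp_neg_le_of_abs_sub_le M hAQ
      (intervalIntegral.integral_nonneg ht.le fun _ _ => abs_nonneg _)
      (intervalIntegral_le_integral_Ioi hQ.abs habsQ0 ht.le) ht.le
  calc ∫⁻ t in Ioi 0, ENNReal.ofReal (|A t| * exp (-M * t))
      ≤ (∫⁻ t in Ioi 0, ENNReal.ofReal (|Q t| * exp (-M * t))) +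
          ∫⁻ t in Ioi 0, ENNReal.ofReal (q ^ 2 * exp (-(M - q) * t)) :=
        (lintegral_mono_ae hpt).trans (lintegral_add_right _ (by fun_prop)).le
    _ ≤ ENNReal.ofReal q + ENNReal.ofReal (q ^ 2 / (M - q)) :=
        add_le_add (lintegral_Ioi_ofReal_mul_exp_neg_le hQ.abs habsQ0 hM.le)
          (lintegral_Ioi_ofReal_mul_exp_neg_mul (b := M - q) (by linarith) (sq_nonneg q)).le
    _ = ENNReal.ofReal (q + q ^ 2 / (M - q)) :=
        (ENNReal.ofReal_add hq0 (div_nonneg (sq_nonneg q) (by linarith))).symm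
    _ ≤ ENNReal.ofReal M := ENNReal.ofReal_le_ofReal (add_sq_div_sub_le hq0 hMQ hM)

/-- Lemma 5.2(i) of the paper. Let `Q ∈ L¹((0,∞);ℝ)` and let `A` be a
measurable real-valued function on `(0,∞)` with
`|A(t) - Q(t)| ≤ (∫₀^t |Q|)² exp(t ∫₀^t |Q|)` for a.e. `t > 0`. Then for every `M > 0` with
`M ≥ 2‖Q‖_{L¹(0,∞)}` one has `∫₀^∞ |A(t)| e^{-Mt} dt ≤ M`. -/
theorem statement14 (Q A : ℝ → ℝ)
    (hQ : IntegrableOn Q (Set.Ioi 0))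
    (hA : Measurable A)
    (hbound : ∀ᵐ t ∂(volume.restrict (Set.Ioi (0:ℝ))),
      |A t - Q t| ≤ (∫ s in (0:ℝ)..t, |Q s|) ^ 2 *
        Real.exp (t * ∫ s in (0:ℝ)..t, |Q s|))
    (M : ℝ) (hM : 0 < M)
    (hMQ : 2 * ∫ t in Set.Ioi (0:ℝ), |Q t| ≤ M) :
    (∫⁻ t in Set.Ioi (0:ℝ), ENNReal.ofReal (|A t| * Real.exp (-M * t)))
      ≤ ENNReal.ofReal M :=
  statement14_general Q A hQ hbound M hM hMQ
end

section
/- Let 0 < a < ∞ and M > 0. Let K₁, K₂ be measurable real-valued functions on {(t,s) : 0 ≤ s ≤ t ≤ a} each satisfying the integral equation K_j(t,s₂) = K_j(t,s₁) + ∫_{s₁}^{s₂} ∫_{y₂}^{t} K_j(y₁,y₂) K_j(t - y₁ + y₂, y₂) dy₁ dy₂ for all 0 < s₁ < s₂ < t < a (j = 1,2). Define g(s) := ∫_s^a |K₁(t,s) - K₂(t,s)| e^{-Mt} dt and D := sup_{0 ≤ s < a} e^{Ms} ∫_s^a ( |K₁(t,s)| + |K₂(t,s)| ) e^{-Mt}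 dt. If g is continuous on [0,a] and D < ∞, then g(s) ≤ g(0) · e^{Ds} for all s ∈ [0,a]. -/
open MeasureTheory Real Set
open scoped ENNReal

noncomputable section

/-- `g(s) = ∫_s^a |K₁(t,s) - K₂(t,s)| e^{-Mt} dt`. -/
def gFun (a M : ℝ) (K₁ K₂ : ℝ → ℝ → ℝ) (s : ℝ) : ℝ :=
  ∫ t in Set.Ioc s a, |K₁ t s - K₂ t s| * Real.exp (-M * t)

/-- `D = sup_{0 ≤ s < a} e^{Ms} ∫_s^a (|K₁(t,s)| + |K₂(t,s)|) e^{-Mt} dt`, as an extended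
real number. -/
def DConst (a M : ℝ) (K₁ K₂ : ℝ → ℝ → ℝ) : ℝ≥0∞ :=
  ⨆ s : {s : ℝ // 0 ≤ s ∧ s < a},
    ENNReal.ofReal (Real.exp (M * s.1)) *
      ∫⁻ t in Set.Ioc s.1 a, ENNReal.ofReal ((|K₁ t s.1| + |K₂ t s.1|) * Real.exp (-M * t))

/-! Subtracting the integral equations for `K₁` and `K₂` and writing
`xy - x'y' = (x - x')y + x'(y - y')` bounds `|K₁ - K₂|(t,s₂)` by `|K₁ - K₂|(t,s₁)` plus an integral
that is bilinear in `K₁ - K₂` and `Kⱼ`. After multiplying by `e^{-Mt}` and integrating in `t`,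
Tonelli and the factorisation `e^{-Mt} = e^{My₂} e^{-My₁} e^{-M(t-y₁+y₂)}` turn the inner part into
a truncated convolution, bounded by `g(y₂) · e^{My₂} ∫ (|K₁| + |K₂|)(t,y₂) e^{-Mt} dt ≤ D g(y₂)`.
Hence `g(s₂) ≤ g(s₁) + D ∫_{s₁}^{s₂} g` for `0 < s₁ < s₂ < a`, and Grönwall's inequality together
with the continuity of `g` at the endpoints gives the claim. -/

open Function

theorem le_mul_exp_of_le_add_mul_integral {g : ℝ → ℝ} {a b C D : ℝ} (hD : 0 ≤ D)
    (hg : ContinuousOn g (Icc a b)) (h : ∀ x ∈ Icc a b, g x ≤ C + D * ∫ y in a..x, g y) :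
    ∀ x ∈ Icc a b, g x ≤ C * exp (D * (x - a)) := by
  intro x hx
  set P : ℝ → ℝ := fun x => ∫ y in a..x, g y
  have hint : IntervalIntegrable g volume a b := hg.intervalIntegrable_of_Icc (hx.1.trans hx.2)
  have hP_cont : ContinuousOn P (Icc a b) :=
    (intervalIntegral.continuousOn_primitive_interval' hint left_mem_uIcc).mono Icc_subset_uIcc
  have hP_deriv : ∀ x ∈ Ico a b, HasDerivWithinAt P (g x) (Ici x) x := fun x hx =>
    intervalIntegral.integral_hasDerivWithinAt_right
      (hint.mono_set (uIcc_subset_uIcc_left (Icc_subset_uIcc (Ico_subset_Icc_self hx))))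
      ((hg.stronglyMeasurableAtFilter_nhdsWithin measurableSet_Icc x).filter_mono
        (nhdsWithin_le_of_mem (Icc_mem_nhdsGT_of_mem hx)))
      ((hg x (Ico_subset_Icc_self hx)).mono_of_mem_nhdsWithin (Icc_mem_nhdsGT_of_mem hx))
  have hP_le : P x ≤ gronwallBound 0 D C (x - a) :=
    le_gronwallBound_of_liminf_deriv_right_le hP_cont
      (fun x hx _ hr => (hP_deriv x hx).liminf_right_slope_le hr) (by simp [P])
      (fun x hx => by linarith [h x (Ico_subset_Icc_self hx)]) x hx
  calc g x ≤ C + D * gronwallBound 0 D C (x - a) := (h x hx).trans (by gcongr)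
    _ = C * exp (D * (x - a)) := by
        rcases hD.eq_or_lt with rfl | hD
        · simp [gronwallBound_K0]
        · rw [gronwallBound_of_K_ne_0 hD.ne']
          field_simp
          ring

theorem le_mul_exp_of_le_add_mul_integral_Ioo {g : ℝ → ℝ} {a D : ℝ} (hD : 0 ≤ D)
    (hg : ContinuousOn g (Icc 0 a))
    (h : ∀ s₁ s₂, 0 < s₁ → s₁ < s₂ → s₂ < a → g s₂ ≤ g s₁ + D * ∫ y in s₁..s₂, g y) :
    ∀ s ∈ Icc 0 a, g s ≤ g 0 * exp (D * s) := by
  have hIoo : ∀ s ∈ Ioo 0 a, g s ≤ g 0 * exp (D * s) := by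
    intro s hs
    have hcont : ContinuousOn (fun s₁ => g s₁ * exp (D * (s - s₁))) (Icc 0 s) :=
      (hg.mono (Icc_subset_Icc_right hs.2.le)).mul (by fun_prop)
    have key : ∀ s₁ ∈ Ioo 0 s, g s ≤ g s₁ * exp (D * (s - s₁)) := fun s₁ hs₁ =>
      le_mul_exp_of_le_add_mul_integral hD (hg.mono (Icc_subset_Icc hs₁.1.le hs.2.le))
        (fun x hx => by
          rcases hx.1.eq_or_lt with rfl | hx₁
          · simp
          · exact h s₁ x hs₁.1 hx₁ (hx.2.trans_lt hs.2))
        s ⟨hs₁.2.le, le_rfl⟩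
    exact (le_on_closure key continuousOn_const (by rwa [closure_Ioo hs.1.ne])
      (by rw [closure_Ioo hs.1.ne]; exact left_mem_Icc.2 hs.1.le)).trans_eq (by simp)
  intro s hs
  rcases hs.1.eq_or_lt with rfl | hs₀
  · simp
  have ha : (0 : ℝ) ≠ a := (hs₀.trans_le hs.2).ne
  exact le_on_closure hIoo (by rw [closure_Ioo ha]; exact hg)
    (by rw [closure_Ioo ha]; fun_prop) (by rwa [closure_Ioo ha])

theorem measurable_setLIntegral_Ioc {α : Type*} [MeasurableSpace α] {f : α → ℝ → ℝ≥0∞}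
    (hf : Measurable (uncurry f)) {l r : α → ℝ} (hl : Measurable l) (hr : Measurable r) :
    Measurable fun x => ∫⁻ y in Ioc (l x) (r x), f x y := by
  have hS : MeasurableSet {p : α × ℝ | l p.1 < p.2 ∧ p.2 ≤ r p.1} :=
    (measurableSet_lt (hl.comp measurable_fst) measurable_snd).inter
      (measurableSet_le measurable_snd (hr.comp measurable_fst))
  have h : (fun x => ∫⁻ y in Ioc (l x) (r x), f x y) =
      fun x => ∫⁻ y, {p : α × ℝ | l p.1 < p.2 ∧ p.2 ≤ r p.1}.indicator (uncurry f) (x, y) := by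
    funext x
    rw [← lintegral_indicator measurableSet_Ioc]
    rfl
  rw [h]
  exact (hf.indicator hS).lintegral_prod_right'

theorem lintegral_Ioc_conv_le {u v : ℝ → ℝ≥0∞} (hu : Measurable u) (hv : Measurable v)
    (c a : ℝ) :
    ∫⁻ t in Ioc c a, ∫⁻ y in Ioc c t, u y * v (t - y + c) ≤
      (∫⁻ y in Ioc c a, u y) * ∫⁻ z in Ioc c a, v z := by
  set Φ : ℝ → ℝ → ℝ≥0∞ := fun t y => if y ≤ t then u y * v (t - y + c) else 0
  have hΦ : Measurable (uncurry Φ) :=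
    Measurable.ite (measurableSet_le measurable_snd measurable_fst)
      ((hu.comp measurable_snd).mul (hv.comp ((measurable_fst.sub measurable_snd).add_const c)))
      measurable_const
  calc ∫⁻ t in Ioc c a, ∫⁻ y in Ioc c t, u y * v (t - y + c)
      ≤ ∫⁻ t in Ioc c a, ∫⁻ y in Ioc c a, Φ t y := by
        refine setLIntegral_mono' measurableSet_Ioc fun t ht => ?_
        calc ∫⁻ y in Ioc c t, u y * v (t - y + c) = ∫⁻ y in Ioc c t, Φ t y :=
              setLIntegral_congr_fun measurableSet_Ioc fun y hy => (if_pos hy.2).symm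
          _ ≤ ∫⁻ y in Ioc c a, Φ t y := lintegral_mono_set (Ioc_subset_Ioc_right ht.2)
    _ = ∫⁻ y in Ioc c a, ∫⁻ t in Ioc c a, Φ t y := lintegral_lintegral_swap hΦ.aemeasurable
    _ ≤ ∫⁻ y in Ioc c a, u y * ∫⁻ z in Icc c a, v z := by
        refine setLIntegral_mono' measurableSet_Ioc fun y hy => ?_
        calc ∫⁻ t in Ioc c a, Φ t y
            ≤ ∫⁻ t, u y * (Icc c a).indicator v (t + (c - y)) := by
              refine (setLIntegral_mono' measurableSet_Ioc fun t ht => ?_).trans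
                (setLIntegral_le_lintegral _ _)
              by_cases hyt : y ≤ t
              · have hmem : t + (c - y) ∈ Icc c a := ⟨by linarith, by linarith [ht.2, hy.1]⟩
                simp only [Φ, if_pos hyt, indicator_of_mem hmem]
                rw [show t + (c - y) = t - y + c by ring]
              · simp [Φ, hyt]
          _ = u y * ∫⁻ z in Icc c a, v z := by
              have hm : Measurable fun t => (Icc c a).indicator v (t + (c - y)) :=
                (hv.indicator measurableSet_Icc).comp (measurable_add_const _)
              rw [lintegral_const_mul _ hm, lintegral_add_right_eq_self
                (fun z => (Icc c a).indicator v z), lintegral_indicator measurableSet_Icc]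
    _ = (∫⁻ y in Ioc c a, u y) * ∫⁻ z in Ioc c a, v z := by
        rw [lintegral_mul_const _ hu, setLIntegral_congr (Ioc_ae_eq_Icc (a := c) (b := a)).symm]

/-- The `ℝ≥0∞`-valued counterpart of `g` (for `K = K₁ - K₂`) and of the integrals in `D`;
in `ℝ≥0∞` Tonelli applies without any integrability bookkeeping. -/
def weightedSliceNorm (a M : ℝ) (K : ℝ → ℝ → ℝ) (s : ℝ) : ℝ≥0∞ :=
  ∫⁻ t in Ioc s a, ‖K t s * exp (-M * t)‖ₑ

theorem measurable_apply_uncurry {α : Type*} [MeasurableSpace α] {K : ℝ → ℝ → ℝ}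
    (hK : Measurable (uncurry K)) {x y : α → ℝ} (hx : Measurable x) (hy : Measurable y) :
    Measurable fun q => K (x q) (y q) :=
  hK.comp (hx.prodMk hy)

theorem lintegral_exp_mul_conv_le {A B : ℝ → ℝ → ℝ} (hA : Measurable (uncurry A))
    (hB : Measurable (uncurry B)) (a M c : ℝ) :
    ∫⁻ t in Ioc c a, ‖exp (-M * t)‖ₑ * ∫⁻ y in Ioc c t, ‖A y c‖ₑ * ‖B (t - y + c) c‖ₑ ≤
      ENNReal.ofReal (exp (M * c)) * (weightedSliceNorm a M A c * weightedSliceNorm a M B c) := by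
  set u : ℝ → ℝ≥0∞ := fun y => ‖A y c * exp (-M * y)‖ₑ
  set v : ℝ → ℝ≥0∞ := fun z => ‖B z c * exp (-M * z)‖ₑ
  have hu : Measurable u := by
    have := measurable_apply_uncurry hA measurable_id (measurable_const (a := c))
    fun_prop
  have hv : Measurable v := by
    have := measurable_apply_uncurry hB measurable_id (measurable_const (a := c))
    fun_prop
  have hsplit : ∀ t y, ‖exp (-M * t)‖ₑ * (‖A y c‖ₑ * ‖B (t - y + c) c‖ₑ) =
      ENNReal.ofReal (exp (M * c)) * (u y * v (t - y + c)) := by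
    intro t y
    rw [← enorm_of_nonneg (exp_pos _).le]
    simp only [u, v, ← enorm_mul]
    congr 1
    rw [show -M * t = M * c + -M * y + -M * (t - y + c) by ring, exp_add, exp_add]
    ring
  calc ∫⁻ t in Ioc c a, ‖exp (-M * t)‖ₑ * ∫⁻ y in Ioc c t, ‖A y c‖ₑ * ‖B (t - y + c) c‖ₑ
      = ENNReal.ofReal (exp (M * c)) *
          ∫⁻ t in Ioc c a, ∫⁻ y in Ioc c t, u y * v (t - y + c) := by
        rw [← lintegral_const_mul' _ _ ENNReal.ofReal_ne_top]
        refine lintegral_congr fun t => ?_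
        rw [← lintegral_const_mul' _ _ enorm_ne_top,
          ← lintegral_const_mul' _ _ ENNReal.ofReal_ne_top]
        simp only [hsplit]
    _ ≤ ENNReal.ofReal (exp (M * c)) * (weightedSliceNorm a M A c * weightedSliceNorm a M B c) := by
        gcongr
        exact lintegral_Ioc_conv_le hu hv c a

theorem lintegral_exp_mul_conv_add_le {A B C E : ℝ → ℝ → ℝ} (hA : Measurable (uncurry A))
    (hB : Measurable (uncurry B)) (hC : Measurable (uncurry C)) (hE : Measurable (uncurry E))
    (a M c : ℝ) :
    ∫⁻ t in Ioc c a, ‖exp (-M * t)‖ₑ * ∫⁻ y in Ioc c t,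
        (‖A y c‖ₑ * ‖B (t - y + c) c‖ₑ + ‖C y c‖ₑ * ‖E (t - y + c) c‖ₑ) ≤
      ENNReal.ofReal (exp (M * c)) * (weightedSliceNorm a M A c * weightedSliceNorm a M B c +
        weightedSliceNorm a M C c * weightedSliceNorm a M E c) := by
  have hAB : Measurable (uncurry fun t y => ‖A y c‖ₑ * ‖B (t - y + c) c‖ₑ) :=
    (measurable_apply_uncurry hA measurable_snd measurable_const).enorm.mul
      (measurable_apply_uncurry hB (by fun_prop) measurable_const).enorm
  have hAB_y : ∀ t, Measurable fun y => ‖A y c‖ₑ * ‖B (t - y + c) c‖ₑ := fun _ =>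
    hAB.comp measurable_prodMk_left
  have hAB_t : Measurable fun t =>
      ‖exp (-M * t)‖ₑ * ∫⁻ y in Ioc c t, ‖A y c‖ₑ * ‖B (t - y + c) c‖ₑ := by
    have := measurable_setLIntegral_Ioc hAB (measurable_const (a := c)) measurable_id
    fun_prop
  calc _ = (∫⁻ t in Ioc c a, ‖exp (-M * t)‖ₑ * ∫⁻ y in Ioc c t, ‖A y c‖ₑ * ‖B (t - y + c) c‖ₑ) +
        ∫⁻ t in Ioc c a, ‖exp (-M * t)‖ₑ * ∫⁻ y in Ioc c t, ‖C y c‖ₑ * ‖E (t - y + c) c‖ₑ := by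
        rw [← lintegral_add_left hAB_t]
        refine lintegral_congr fun t => ?_
        rw [← mul_add, ← lintegral_add_left (hAB_y t)]
    _ ≤ _ := by
        rw [mul_add]
        exact add_le_add (lintegral_exp_mul_conv_le hA hB a M c)
          (lintegral_exp_mul_conv_le hC hE a M c)

theorem measurable_exp_mul_lintegral_conv_add {A B C E : ℝ → ℝ → ℝ}
    (hA : Measurable (uncurry A)) (hB : Measurable (uncurry B)) (hC : Measurable (uncurry C))
    (hE : Measurable (uncurry E)) (M : ℝ) :
    Measurable fun p : ℝ × ℝ => ‖exp (-M * p.1)‖ₑ * ∫⁻ y in Ioc p.2 p.1,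
      (‖A y p.2‖ₑ * ‖B (p.1 - y + p.2) p.2‖ₑ + ‖C y p.2‖ₑ * ‖E (p.1 - y + p.2) p.2‖ₑ) := by
  have hy : Measurable fun q : (ℝ × ℝ) × ℝ => q.2 := measurable_snd
  have hc : Measurable fun q : (ℝ × ℝ) × ℝ => q.1.2 := measurable_fst.snd
  have hz : Measurable fun q : (ℝ × ℝ) × ℝ => q.1.1 - q.2 + q.1.2 := by fun_prop
  have := measurable_setLIntegral_Ioc (f := fun (p : ℝ × ℝ) y =>
      ‖A y p.2‖ₑ * ‖B (p.1 - y + p.2) p.2‖ₑ + ‖C y p.2‖ₑ * ‖E (p.1 - y + p.2) p.2‖ₑ)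
    (((measurable_apply_uncurry hA hy hc).enorm.mul (measurable_apply_uncurry hB hz hc).enorm).add
      ((measurable_apply_uncurry hC hy hc).enorm.mul (measurable_apply_uncurry hE hz hc).enorm))
    measurable_snd measurable_fst
  fun_prop

theorem enorm_mul_sub_mul_le (x x' y y' : ℝ) :
    ‖x * y - x' * y'‖ₑ ≤ ‖x - x'‖ₑ * ‖y‖ₑ + ‖x'‖ₑ * ‖y - y'‖ₑ := by
  rw [show x * y - x' * y' = (x - x') * y + x' * (y - y') by ring, ← enorm_mul, ← enorm_mul]
  exact enorm_add_le _ _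

theorem enorm_sub_le_of_kEqnHolds {a s₁ s₂ t : ℝ} {K₁ K₂ : ℝ → ℝ → ℝ}
    (hK₁int : KEqnIntegrable a K₁) (hK₂int : KEqnIntegrable a K₂)
    (hK₁eq : KEqnHolds a K₁) (hK₂eq : KEqnHolds a K₂)
    (h01 : 0 < s₁) (h12 : s₁ < s₂) (h2t : s₂ < t) (hta : t < a) :
    ‖(K₁ - K₂) t s₂‖ₑ ≤ ‖(K₁ - K₂) t s₁‖ₑ + ∫⁻ y₂ in Ioc s₁ s₂, ∫⁻ y₁ in Ioc y₂ t,
      (‖(K₁ - K₂) y₁ y₂‖ₑ * ‖K₁ (t - y₁ + y₂) y₂‖ₑ +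
        ‖K₂ y₁ y₂‖ₑ * ‖(K₁ - K₂) (t - y₁ + y₂) y₂‖ₑ) := by
  obtain ⟨hin₁, hout₁⟩ := hK₁int s₁ s₂ t h01 h12 h2t hta
  obtain ⟨hin₂, hout₂⟩ := hK₂int s₁ s₂ t h01 h12 h2t hta
  have hinner : ∀ y₂ ∈ Ioc s₁ s₂,
      (∫ y₁ in y₂..t, K₁ y₁ y₂ * K₁ (t - y₁ + y₂) y₂) -
          ∫ y₁ in y₂..t, K₂ y₁ y₂ * K₂ (t - y₁ + y₂) y₂ =
        ∫ y₁ in Ioc y₂ t, (K₁ y₁ y₂ * K₁ (t - y₁ + y₂) y₂ - K₂ y₁ y₂ * K₂ (t - y₁ + y₂) y₂) :=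
    fun y₂ hy₂ => by
      rw [← intervalIntegral.integral_sub (hin₁ y₂ (Ioc_subset_Icc_self hy₂))
        (hin₂ y₂ (Ioc_subset_Icc_self hy₂)), intervalIntegral.integral_of_le (hy₂.2.trans h2t.le)]
  have hdiff : (K₁ - K₂) t s₂ = (K₁ - K₂) t s₁ + ∫ y₂ in Ioc s₁ s₂, ∫ y₁ in Ioc y₂ t,
      (K₁ y₁ y₂ * K₁ (t - y₁ + y₂) y₂ - K₂ y₁ y₂ * K₂ (t - y₁ + y₂) y₂) := by
    rw [← setIntegral_congr_fun measurableSet_Ioc hinner, ← intervalIntegral.integral_of_le h12.le,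
      intervalIntegral.integral_sub hout₁ hout₂]
    simp only [Pi.sub_apply]
    rw [hK₁eq s₁ s₂ t h01 h12 h2t hta, hK₂eq s₁ s₂ t h01 h12 h2t hta]
    ring
  rw [hdiff]
  refine (enorm_add_le _ _).trans (add_le_add_right ?_ _)
  refine (enorm_integral_le_lintegral_enorm _).trans
    (setLIntegral_mono' measurableSet_Ioc fun y₂ _ => ?_)
  exact (enorm_integral_le_lintegral_enorm _).trans
    (lintegral_mono fun y₁ => enorm_mul_sub_mul_le _ _ _ _)

theorem enorm_sub_mul_exp_le_of_kEqnHolds {a M s₁ s₂ t : ℝ} {K₁ K₂ : ℝ → ℝ → ℝ}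
    (hK₁int : KEqnIntegrable a K₁) (hK₂int : KEqnIntegrable a K₂)
    (hK₁eq : KEqnHolds a K₁) (hK₂eq : KEqnHolds a K₂)
    (h01 : 0 < s₁) (h12 : s₁ < s₂) (h2t : s₂ < t) (hta : t < a) :
    ‖(K₁ - K₂) t s₂ * exp (-M * t)‖ₑ ≤ ‖(K₁ - K₂) t s₁ * exp (-M * t)‖ₑ +
      ∫⁻ y₂ in Ioc s₁ s₂, ‖exp (-M * t)‖ₑ * ∫⁻ y₁ in Ioc y₂ t,
        (‖(K₁ - K₂) y₁ y₂‖ₑ * ‖K₁ (t - y₁ + y₂) y₂‖ₑ +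
          ‖K₂ y₁ y₂‖ₑ * ‖(K₁ - K₂) (t - y₁ + y₂) y₂‖ₑ) := by
  rw [enorm_mul, enorm_mul, lintegral_const_mul' _ _ enorm_ne_top, mul_comm ‖exp _‖ₑ, ← add_mul]
  gcongr
  exact enorm_sub_le_of_kEqnHolds hK₁int hK₂int hK₁eq hK₂eq h01 h12 h2t hta

section WeightedSliceNorm

variable {a M s : ℝ} {K₁ K₂ : ℝ → ℝ → ℝ}

theorem measurable_mul_exp {K : ℝ → ℝ → ℝ} (hK : Measurable (uncurry K)) (M s : ℝ) :
    Measurable fun t => K t s * exp (-M * t) := by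
  have := measurable_apply_uncurry hK measurable_id (measurable_const (a := s))
  fun_prop

theorem weightedSliceNorm_sub_le_add (hK₁ : Measurable (uncurry K₁)) :
    weightedSliceNorm a M (K₁ - K₂) s ≤
      weightedSliceNorm a M K₁ s + weightedSliceNorm a M K₂ s := by
  rw [weightedSliceNorm, weightedSliceNorm, weightedSliceNorm,
    ← lintegral_add_left (measurable_mul_exp hK₁ M s).enorm]
  refine lintegral_mono fun t => ?_
  rw [Pi.sub_apply, Pi.sub_apply, sub_mul]
  exact enorm_sub_le

theorem ofReal_exp_mul_weightedSliceNorm_add_le_dConst (hK₁ : Measurable (uncurry K₁))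
    (hs0 : 0 ≤ s) (hsa : s < a) :
    ENNReal.ofReal (exp (M * s)) * (weightedSliceNorm a M K₁ s + weightedSliceNorm a M K₂ s) ≤
      DConst a M K₁ K₂ := by
  refine le_iSup_of_le (⟨s, hs0, hsa⟩ : {s : ℝ // 0 ≤ s ∧ s < a}) (le_of_eq ?_)
  rw [weightedSliceNorm, weightedSliceNorm, ← lintegral_add_left (measurable_mul_exp hK₁ M s).enorm]
  congr 1
  refine lintegral_congr fun t => ?_
  rw [add_mul, ENNReal.ofReal_add (by positivity) (by positivity), enorm_eq_ofReal_abs,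
    enorm_eq_ofReal_abs, abs_mul, abs_mul, abs_exp]

theorem weightedSliceNorm_sub_lt_top (hK₁ : Measurable (uncurry K₁))
    (hD : DConst a M K₁ K₂ < ⊤) (hs0 : 0 ≤ s) (hsa : s < a) :
    weightedSliceNorm a M (K₁ - K₂) s < ⊤ :=
  (weightedSliceNorm_sub_le_add hK₁).trans_lt <| ENNReal.lt_top_of_mul_ne_top_right
    ((ofReal_exp_mul_weightedSliceNorm_add_le_dConst hK₁ hs0 hsa).trans_lt hD).ne
    (ENNReal.ofReal_pos.2 (exp_pos _)).ne'

theorem gFun_eq_toReal_weightedSliceNorm (hK₁ : Measurable (uncurry K₁))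
    (hK₂ : Measurable (uncurry K₂)) :
    gFun a M K₁ K₂ s = (weightedSliceNorm a M (K₁ - K₂) s).toReal := by
  rw [gFun, weightedSliceNorm, ← integral_norm_eq_lintegral_enorm
    (measurable_mul_exp (K := K₁ - K₂) (hK₁.sub hK₂) M s).aestronglyMeasurable]
  refine integral_congr_ae (ae_of_all _ fun t => ?_)
  dsimp only
  rw [norm_mul, Real.norm_eq_abs, Real.norm_eq_abs, abs_exp, Pi.sub_apply, Pi.sub_apply]

theorem measurable_weightedSliceNorm {K : ℝ → ℝ → ℝ} (hK : Measurable (uncurry K)) :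
    Measurable (weightedSliceNorm a M K) :=
  measurable_setLIntegral_Ioc (f := fun s t => ‖K t s * exp (-M * t)‖ₑ)
    ((measurable_apply_uncurry hK measurable_snd measurable_fst).mul
      (by fun_prop : Measurable fun p : ℝ × ℝ => exp (-M * p.2))).enorm measurable_id
    measurable_const

end WeightedSliceNorm

theorem weightedSliceNorm_sub_le_add_mul_lintegral {a M s₁ s₂ : ℝ} {K₁ K₂ : ℝ → ℝ → ℝ}
    (hK₁ : Measurable (uncurry K₁)) (hK₂ : Measurable (uncurry K₂))
    (hK₁int : KEqnIntegrable a K₁) (hK₂int : KEqnIntegrable a K₂)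
    (hK₁eq : KEqnHolds a K₁) (hK₂eq : KEqnHolds a K₂) {D : ℝ≥0∞}
    (hD : ∀ y ∈ Ioc s₁ s₂,
      ENNReal.ofReal (exp (M * y)) * (weightedSliceNorm a M K₁ y + weightedSliceNorm a M K₂ y) ≤ D)
    (h01 : 0 < s₁) (h12 : s₁ < s₂) :
    weightedSliceNorm a M (K₁ - K₂) s₂ ≤
      weightedSliceNorm a M (K₁ - K₂) s₁ +
        D * ∫⁻ y in Ioc s₁ s₂, weightedSliceNorm a M (K₁ - K₂) y := by
  set Δ := K₁ - K₂
  have hΔ : Measurable (uncurry Δ) := hK₁.sub hK₂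
  set Ψ : ℝ → ℝ → ℝ → ℝ≥0∞ := fun t y₂ y₁ =>
    ‖Δ y₁ y₂‖ₑ * ‖K₁ (t - y₁ + y₂) y₂‖ₑ + ‖K₂ y₁ y₂‖ₑ * ‖Δ (t - y₁ + y₂) y₂‖ₑ
  have hinner : ∀ y₂ ∈ Ioc s₁ s₂,
      ∫⁻ t in Ioo s₂ a, ‖exp (-M * t)‖ₑ * ∫⁻ y₁ in Ioc y₂ t, Ψ t y₂ y₁ ≤
        D * weightedSliceNorm a M Δ y₂ := by
    intro y₂ hy₂
    calc ∫⁻ t in Ioo s₂ a, ‖exp (-M * t)‖ₑ * ∫⁻ y₁ in Ioc y₂ t, Ψ t y₂ y₁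
        ≤ ∫⁻ t in Ioc y₂ a, ‖exp (-M * t)‖ₑ * ∫⁻ y₁ in Ioc y₂ t, Ψ t y₂ y₁ :=
          lintegral_mono_set (Ioo_subset_Ioc_self.trans (Ioc_subset_Ioc_left hy₂.2))
      _ ≤ ENNReal.ofReal (exp (M * y₂)) *
            (weightedSliceNorm a M Δ y₂ * weightedSliceNorm a M K₁ y₂ +
              weightedSliceNorm a M K₂ y₂ * weightedSliceNorm a M Δ y₂) :=
          lintegral_exp_mul_conv_add_le hΔ hK₁ hK₂ hΔ a M y₂
      _ = ENNReal.ofReal (exp (M * y₂)) *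
              (weightedSliceNorm a M K₁ y₂ + weightedSliceNorm a M K₂ y₂) *
            weightedSliceNorm a M Δ y₂ := by ring
      _ ≤ D * weightedSliceNorm a M Δ y₂ := by gcongr; exact hD y₂ hy₂
  calc weightedSliceNorm a M Δ s₂ = ∫⁻ t in Ioo s₂ a, ‖Δ t s₂ * exp (-M * t)‖ₑ :=
        (setLIntegral_congr Ioo_ae_eq_Ioc).symm
    _ ≤ ∫⁻ t in Ioo s₂ a, (‖Δ t s₁ * exp (-M * t)‖ₑ +
          ∫⁻ y₂ in Ioc s₁ s₂, ‖exp (-M * t)‖ₑ * ∫⁻ y₁ in Ioc y₂ t, Ψ t y₂ y₁) :=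
        setLIntegral_mono' measurableSet_Ioo fun t ht =>
          enorm_sub_mul_exp_le_of_kEqnHolds hK₁int hK₂int hK₁eq hK₂eq h01 h12 ht.1 ht.2
    _ = (∫⁻ t in Ioo s₂ a, ‖Δ t s₁ * exp (-M * t)‖ₑ) +
          ∫⁻ y₂ in Ioc s₁ s₂, ∫⁻ t in Ioo s₂ a,
            ‖exp (-M * t)‖ₑ * ∫⁻ y₁ in Ioc y₂ t, Ψ t y₂ y₁ := by
        rw [lintegral_add_left (measurable_mul_exp hΔ M s₁).enorm,
          lintegral_lintegral_swap
            (measurable_exp_mul_lintegral_conv_add hΔ hK₁ hK₂ hΔ M).aemeasurable]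
    _ ≤ weightedSliceNorm a M Δ s₁ + ∫⁻ y₂ in Ioc s₁ s₂, D * weightedSliceNorm a M Δ y₂ :=
        add_le_add (lintegral_mono_set (Ioo_subset_Ioc_self.trans (Ioc_subset_Ioc_left h12.le)))
          (setLIntegral_mono' measurableSet_Ioc hinner)
    _ = _ := by rw [lintegral_const_mul _ (measurable_weightedSliceNorm hΔ)]

theorem gFun_le_add_mul_integral {a M s₁ s₂ : ℝ} {K₁ K₂ : ℝ → ℝ → ℝ}
    (hK₁ : Measurable (uncurry K₁)) (hK₂ : Measurable (uncurry K₂))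
    (hK₁int : KEqnIntegrable a K₁) (hK₂int : KEqnIntegrable a K₂)
    (hK₁eq : KEqnHolds a K₁) (hK₂eq : KEqnHolds a K₂)
    (hg : ContinuousOn (gFun a M K₁ K₂) (Icc 0 a)) (hD : DConst a M K₁ K₂ < ⊤)
    (h01 : 0 < s₁) (h12 : s₁ < s₂) (h2a : s₂ < a) :
    gFun a M K₁ K₂ s₂ ≤
      gFun a M K₁ K₂ s₁ + (DConst a M K₁ K₂).toReal * ∫ y in s₁..s₂, gFun a M K₁ K₂ y := by
  have hfin : ∀ y ∈ Icc s₁ s₂, weightedSliceNorm a M (K₁ - K₂) y ≠ ⊤ := fun y hy =>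
    (weightedSliceNorm_sub_lt_top hK₁ hD (h01.le.trans hy.1) (hy.2.trans_lt h2a)).ne
  have hg_nonneg : ∀ y, 0 ≤ gFun a M K₁ K₂ y := fun y => by
    rw [gFun_eq_toReal_weightedSliceNorm hK₁ hK₂]
    exact ENNReal.toReal_nonneg
  have hlint : ∫⁻ y in Ioc s₁ s₂, weightedSliceNorm a M (K₁ - K₂) y =
      ENNReal.ofReal (∫ y in s₁..s₂, gFun a M K₁ K₂ y) := by
    rw [intervalIntegral.integral_of_le h12.le, ofReal_integral_eq_lintegral_ofReal
      ((hg.mono (Icc_subset_Icc h01.le h2a.le)).integrableOn_Icc.mono_set Ioc_subset_Icc_self)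
      (ae_of_all _ hg_nonneg)]
    refine setLIntegral_congr_fun measurableSet_Ioc fun y hy => ?_
    rw [gFun_eq_toReal_weightedSliceNorm hK₁ hK₂,
      ENNReal.ofReal_toReal (hfin y (Ioc_subset_Icc_self hy))]
  have key := weightedSliceNorm_sub_le_add_mul_lintegral (M := M) hK₁ hK₂ hK₁int hK₂int hK₁eq hK₂eq
    (fun y hy => ofReal_exp_mul_weightedSliceNorm_add_le_dConst hK₁ (h01.le.trans hy.1.le)
      (hy.2.trans_lt h2a)) h01 h12
  rw [hlint] at key
  have hs₁ := hfin s₁ (left_mem_Icc.2 h12.le)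
  have key' := ENNReal.toReal_mono
    (ENNReal.add_ne_top.2 ⟨hs₁, ENNReal.mul_ne_top hD.ne ENNReal.ofReal_ne_top⟩) key
  rwa [ENNReal.toReal_add hs₁ (ENNReal.mul_ne_top hD.ne ENNReal.ofReal_ne_top),
    ENNReal.toReal_mul, ENNReal.toReal_ofReal (intervalIntegral.integral_nonneg h12.le
      fun y _ => hg_nonneg y), ← gFun_eq_toReal_weightedSliceNorm hK₁ hK₂,
    ← gFun_eq_toReal_weightedSliceNorm hK₁ hK₂] at key'

section EqOnTriangle

variable {a : ℝ} {K K' : ℝ → ℝ → ℝ}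

theorem eqOn_mul_shift_of_eqOn_triangle (hK : EqOn (uncurry K') (uncurry K) (triangleK a))
    {y₂ t : ℝ} (hy₂ : 0 ≤ y₂) (hta : t ≤ a) :
    EqOn (fun y₁ => K' y₁ y₂ * K' (t - y₁ + y₂) y₂) (fun y₁ => K y₁ y₂ * K (t - y₁ + y₂) y₂)
      (Icc y₂ t) := fun y₁ hy₁ => by
  have h₁ : K' y₁ y₂ = K y₁ y₂ :=
    hK (show (y₁, y₂) ∈ triangleK a from ⟨hy₂, hy₁.1, hy₁.2.trans hta⟩)
  have h₂ : K' (t - y₁ + y₂) y₂ = K (t - y₁ + y₂) y₂ :=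
    hK (show (t - y₁ + y₂, y₂) ∈ triangleK a from ⟨hy₂, by linarith [hy₁.2], by linarith [hy₁.1]⟩)
  simp only [h₁, h₂]

theorem intervalIntegral_mul_shift_congr (hK : EqOn (uncurry K') (uncurry K) (triangleK a))
    {y₂ t : ℝ} (hy₂ : 0 ≤ y₂) (hy₂t : y₂ ≤ t) (hta : t ≤ a) :
    ∫ y₁ in y₂..t, K' y₁ y₂ * K' (t - y₁ + y₂) y₂ = ∫ y₁ in y₂..t, K y₁ y₂ * K (t - y₁ + y₂) y₂ :=
  intervalIntegral.integral_congr
    ((eqOn_mul_shift_of_eqOn_triangle hK hy₂ hta).mono (uIcc_of_le hy₂t).subset)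

theorem KEqnIntegrable.congr (h : KEqnIntegrable a K)
    (hK : EqOn (uncurry K') (uncurry K) (triangleK a)) : KEqnIntegrable a K' := by
  intro s₁ s₂ t h01 h12 h2t hta
  obtain ⟨hin, hout⟩ := h s₁ s₂ t h01 h12 h2t hta
  refine ⟨fun y₂ hy₂ => ?_, ?_⟩
  · exact (intervalIntegrable_congr ((eqOn_mul_shift_of_eqOn_triangle hK (h01.le.trans hy₂.1)
      hta.le).symm.mono (uIoc_subset_uIcc.trans (uIcc_of_le (hy₂.2.trans h2t.le)).subset))).mp
      (hin y₂ hy₂)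
  · refine (intervalIntegrable_congr fun y₂ hy₂ => ?_).mp hout
    rw [uIoc_of_le h12.le] at hy₂
    exact (intervalIntegral_mul_shift_congr hK (h01.le.trans hy₂.1.le) (hy₂.2.trans h2t.le)
      hta.le).symm

theorem KEqnHolds.congr (h : KEqnHolds a K)
    (hK : EqOn (uncurry K') (uncurry K) (triangleK a)) : KEqnHolds a K' := by
  intro s₁ s₂ t h01 h12 h2t hta
  have h₂ : K' t s₂ = K t s₂ :=
    hK (show (t, s₂) ∈ triangleK a from ⟨(h01.trans h12).le, h2t.le, hta.le⟩)
  have h₁ : K' t s₁ = K t s₁ :=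
    hK (show (t, s₁) ∈ triangleK a from ⟨h01.le, (h12.trans h2t).le, hta.le⟩)
  rw [h₁, h₂, h s₁ s₂ t h01 h12 h2t hta]
  congr 1
  refine intervalIntegral.integral_congr fun y₂ hy₂ => ?_
  rw [uIcc_of_le h12.le] at hy₂
  exact (intervalIntegral_mul_shift_congr hK (h01.le.trans hy₂.1) (hy₂.2.trans h2t.le)
    hta.le).symm

theorem gFun_congr {M s : ℝ} {K₁ K₂ K₁' K₂' : ℝ → ℝ → ℝ}
    (hK₁ : EqOn (uncurry K₁') (uncurry K₁) (triangleK a))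
    (hK₂ : EqOn (uncurry K₂') (uncurry K₂) (triangleK a)) (hs : 0 ≤ s) :
    gFun a M K₁' K₂' s = gFun a M K₁ K₂ s := by
  refine setIntegral_congr_fun measurableSet_Ioc fun t ht => ?_
  have hmem : (t, s) ∈ triangleK a := ⟨hs, ht.1.le, ht.2⟩
  have h₁ : K₁' t s = K₁ t s := hK₁ hmem
  have h₂ : K₂' t s = K₂ t s := hK₂ hmem
  simp only [h₁, h₂]

theorem dConst_congr {M : ℝ} {K₁ K₂ K₁' K₂' : ℝ → ℝ → ℝ}
    (hK₁ : EqOn (uncurry K₁') (uncurry K₁) (triangleK a))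
    (hK₂ : EqOn (uncurry K₂') (uncurry K₂) (triangleK a)) :
    DConst a M K₁' K₂' = DConst a M K₁ K₂ := by
  refine iSup_congr fun s => congrArg _ (setLIntegral_congr_fun measurableSet_Ioc fun t ht => ?_)
  have hmem : (t, s.1) ∈ triangleK a := ⟨s.2.1, ht.1.le, ht.2⟩
  have h₁ : K₁' t s = K₁ t s := hK₁ hmem
  have h₂ : K₂' t s = K₂ t s := hK₂ hmem
  simp only [h₁, h₂]

end EqOnTriangle

theorem gFun_le_mul_exp {a M : ℝ} {K₁ K₂ : ℝ → ℝ → ℝ}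
    (hK₁ : Measurable (uncurry K₁)) (hK₂ : Measurable (uncurry K₂))
    (hK₁int : KEqnIntegrable a K₁) (hK₂int : KEqnIntegrable a K₂)
    (hK₁eq : KEqnHolds a K₁) (hK₂eq : KEqnHolds a K₂)
    (hg : ContinuousOn (gFun a M K₁ K₂) (Icc 0 a)) (hD : DConst a M K₁ K₂ < ⊤) :
    ∀ s ∈ Icc 0 a, gFun a M K₁ K₂ s ≤ gFun a M K₁ K₂ 0 * exp ((DConst a M K₁ K₂).toReal * s) :=
  le_mul_exp_of_le_add_mul_integral_Ioo ENNReal.toReal_nonneg hg fun _ _ h01 h12 h2a =>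
    gFun_le_add_mul_integral hK₁ hK₂ hK₁int hK₂int hK₁eq hK₂eq hg hD h01 h12 h2a

theorem statement15_general (a M : ℝ)
    (K₁ K₂ : ℝ → ℝ → ℝ)
    (hK₁m : Measurable ((triangleK a).indicator (Function.uncurry fun t s => K₁ t s)))
    (hK₂m : Measurable ((triangleK a).indicator (Function.uncurry fun t s => K₂ t s)))
    (hK₁int : KEqnIntegrable a K₁) (hK₂int : KEqnIntegrable a K₂)
    (hK₁eq : KEqnHolds a K₁) (hK₂eq : KEqnHolds a K₂)
    (hg : ContinuousOn (gFun a M K₁ K₂) (Set.Icc 0 a))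
    (hD : DConst a M K₁ K₂ < ⊤) :
    ∀ s ∈ Set.Icc (0:ℝ) a,
      gFun a M K₁ K₂ s ≤ gFun a M K₁ K₂ 0 * Real.exp ((DConst a M K₁ K₂).toReal * s) := by
  -- Only values on the triangle enter, so `Kⱼ` may be replaced by its measurable restriction.
  set F₁ := curry ((triangleK a).indicator (uncurry fun t s => K₁ t s))
  set F₂ := curry ((triangleK a).indicator (uncurry fun t s => K₂ t s))
  have hF₁ : EqOn (uncurry F₁) (uncurry K₁) (triangleK a) := fun p hp => by
    simp only [F₁, uncurry_curry, indicator_of_mem hp]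
  have hF₂ : EqOn (uncurry F₂) (uncurry K₂) (triangleK a) := fun p hp => by
    simp only [F₂, uncurry_curry, indicator_of_mem hp]
  have hgF : EqOn (gFun a M F₁ F₂) (gFun a M K₁ K₂) (Icc 0 a) := fun s hs =>
    gFun_congr hF₁ hF₂ hs.1
  intro s hs
  rw [← hgF hs, ← hgF (left_mem_Icc.2 (hs.1.trans hs.2)), ← dConst_congr hF₁ hF₂]
  exact gFun_le_mul_exp (by rwa [uncurry_curry]) (by rwa [uncurry_curry])
    (hK₁int.congr hF₁) (hK₂int.congr hF₂) (hK₁eq.congr hF₁) (hK₂eq.congr hF₂) (hg.congr hgF)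
    (by rwa [dConst_congr hF₁ hF₂]) s hs

/-- the Grönwall-type estimate in Lemma 5.3 of the paper. Let
`0 < a < ∞` and `M > 0`, and let `K₁, K₂` be measurable solutions of the integral equation
on `{0 ≤ s ≤ t ≤ a}`. If `g` is continuous on `[0,a]` and `D < ∞`, then
`g(s) ≤ g(0) e^{Ds}` for all `s ∈ [0,a]`. -/
theorem statement15 (a M : ℝ) (ha : 0 < a) (hM : 0 < M)
    (K₁ K₂ : ℝ → ℝ → ℝ)
    (hK₁m : Measurable ((triangleK a).indicator (Function.uncurry fun t s => K₁ t s)))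
    (hK₂m : Measurable ((triangleK a).indicator (Function.uncurry fun t s => K₂ t s)))
    (hK₁int : KEqnIntegrable a K₁) (hK₂int : KEqnIntegrable a K₂)
    (hK₁eq : KEqnHolds a K₁) (hK₂eq : KEqnHolds a K₂)
    (hg : ContinuousOn (gFun a M K₁ K₂) (Set.Icc 0 a))
    (hD : DConst a M K₁ K₂ < ⊤) :
    ∀ s ∈ Set.Icc (0:ℝ) a,
      gFun a M K₁ K₂ s ≤ gFun a M K₁ K₂ 0 * Real.exp ((DConst a M K₁ K₂).toReal * s) :=
  statement15_general a M K₁ K₂ hK₁m hK₂m hK₁int hK₂int hK₁eq hK₂eq hg hD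
end
end

section
/- Let d ≥ 2, 1 < p < ∞, μ > 0 and N > 0. There exists a constant C > 0, depending only on d, p, N and μ, such that for every g ∈ L^p(B^d) with ‖g‖_{L^p(B^d)} ≤ N one has ‖g‖_{L¹(B^d)} ≤ C · ( ∫_{B^d} |g(x)| |x|^μ dx )^α, where α := (d-1) / ( d-1 + μ·p/(p-1) ). -/
open MeasureTheory Real Set
open scoped ENNReal NNReal

noncomputable section

/-!
Split the ball at a radius `ε`. On `B_ε` Hölder's inequality gives
`∫ |g| ≤ N |B_ε|^{1/p'} = K ε^a` with `p' = p/(p-1)` and `a = d/p'`, and off `B_ε` one has `|g| ≤ ε^{-μ} |g| |x|^μ`,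
so `L ≤ K ε^a + ε^{-μ} I`. The choice `ε = (I/K)^{1/(a+μ)}` balances the two terms and gives
`L ≤ 2 K^{1-γ} I^γ` with `γ = a/(a+μ) = d/(d+μp')`. Since `I ≤ L ≤ K`, the same bound holds for
every smaller exponent, in particular for `(d-1)/(d-1+μp')`.
-/

open Filter Topology

theorem le_two_mul_rpow_of_forall_le_add {a μ β K L I : ℝ} (ha : 0 < a) (hμ : 0 ≤ μ)
    (hβ : β ≤ a / (a + μ)) (hK : 0 < K) (hI : 0 ≤ I) (hIK : I ≤ K)
    (h : ∀ ε > 0, L ≤ K * ε ^ a + ε ^ (-μ) * I) :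
    L ≤ 2 * K ^ (1 - β) * I ^ β := by
  rcases hI.eq_or_lt with rfl | hIpos
  · have hlim : Tendsto (fun ε : ℝ => K * ε ^ a) (𝓝[>] 0) (𝓝 0) := by
      have := ((continuous_rpow_const ha.le).tendsto 0).const_mul K
      simpa [zero_rpow ha.ne'] using this.mono_left nhdsWithin_le_nhds
    have hL : L ≤ 0 := ge_of_tendsto hlim
      (eventually_nhdsWithin_of_forall fun ε hε => by simpa using h ε hε)
    have : 0 ≤ 2 * K ^ (1 - β) * (0 : ℝ) ^ β := by positivity
    linarith
  set s := I / K
  have hs0 : 0 < s := by positivity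
  have hs1 : s ≤ 1 := (div_le_one hK).2 hIK
  have hε : 0 < s ^ (a + μ)⁻¹ := by positivity
  have hfirst : (s ^ (a + μ)⁻¹) ^ a = s ^ (a / (a + μ)) := by
    rw [← rpow_mul hs0.le, inv_mul_eq_div]
  have hsecond : (s ^ (a + μ)⁻¹) ^ (-μ) * I = K * s ^ (a / (a + μ)) := by
    have hIs : I = K * s ^ (1 : ℝ) := by rw [rpow_one]; simp only [s]; field_simp
    rw [hIs, ← rpow_mul hs0.le, mul_left_comm, ← rpow_add hs0]
    congr 2
    field_simp
    ring
  calc L ≤ 2 * K * s ^ (a / (a + μ)) := by linarith [hfirst ▸ hsecond ▸ h _ hε]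
    _ ≤ 2 * K * s ^ β :=
      mul_le_mul_of_nonneg_left (rpow_le_rpow_of_exponent_ge hs0 hs1 hβ) (by positivity)
    _ = 2 * K ^ (1 - β) * I ^ β := by
      rw [div_rpow hI hK.le, rpow_sub hK, rpow_one]
      field_simp

theorem ENNReal.le_ofReal_mul_rpow_of_forall_le_add {a μ β K : ℝ} {L I : ℝ≥0∞} (ha : 0 < a)
    (hμ : 0 ≤ μ) (hβ₀ : 0 ≤ β) (hβ : β ≤ a / (a + μ)) (hK : 0 < K) (hIL : I ≤ L)
    (hLK : L ≤ ENNReal.ofReal K)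
    (h : ∀ ε > 0, L ≤ ENNReal.ofReal (K * ε ^ a) + ENNReal.ofReal (ε ^ (-μ)) * I) :
    L ≤ ENNReal.ofReal (2 * K ^ (1 - β)) * I ^ β := by
  have hL : L ≠ ⊤ := ne_top_of_le_ne_top ENNReal.ofReal_ne_top hLK
  have hI : I ≠ ⊤ := ne_top_of_le_ne_top hL hIL
  have hreal : L.toReal ≤ 2 * K ^ (1 - β) * I.toReal ^ β :=
    le_two_mul_rpow_of_forall_le_add ha hμ hβ hK ENNReal.toReal_nonneg
      (ENNReal.toReal_le_of_le_ofReal hK.le (hIL.trans hLK)) fun ε hε =>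
        ENNReal.toReal_le_of_le_ofReal (by positivity) <| by
          rw [ENNReal.ofReal_add (by positivity) (by positivity),
            ENNReal.ofReal_mul (p := ε ^ (-μ)) (by positivity), ENNReal.ofReal_toReal hI]
          exact h ε hε
  calc L = ENNReal.ofReal L.toReal := (ENNReal.ofReal_toReal hL).symm
    _ ≤ ENNReal.ofReal (2 * K ^ (1 - β) * I.toReal ^ β) := ENNReal.ofReal_le_ofReal hreal
    _ = ENNReal.ofReal (2 * K ^ (1 - β)) * I ^ β := by
      rw [ENNReal.ofReal_mul (by positivity),
        ← ENNReal.ofReal_rpow_of_nonneg ENNReal.toReal_nonneg hβ₀, ENNReal.ofReal_toReal hI]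

theorem sub_one_div_sub_one_add_le {d p μ : ℝ} (hd : 1 ≤ d) (hp : 1 < p) (hμ : 0 < μ) :
    (d - 1) / (d - 1 + μ * p / (p - 1)) ≤ d * (1 - 1 / p) / (d * (1 - 1 / p) + μ) := by
  have hp₁ : 0 < p - 1 := by linarith
  have hr : 0 < 1 - 1 / p := sub_pos.2 ((div_lt_one (by linarith)).2 hp)
  have hc : 0 < μ * p / (p - 1) := by positivity
  rw [div_le_div_iff₀ (by linarith) (by positivity)]
  field_simp
  nlinarith [mul_pos hμ hp₁]

theorem setLIntegral_ofReal_abs_le_eLpNorm_mul {α : Type*} [MeasurableSpace α] {ν : Measure α}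
    {g : α → ℝ} {p : ℝ} (hp : 1 ≤ p) {S A : Set α} (hg : AEStronglyMeasurable g (ν.restrict A))
    (hSA : S ⊆ A) :
    ∫⁻ x in S, ENNReal.ofReal |g x| ∂ν ≤
      eLpNorm g (ENNReal.ofReal p) (ν.restrict A) * ν S ^ (1 - 1 / p) := by
  have hrestrict : ν.restrict S ≤ ν.restrict A := Measure.restrict_mono hSA le_rfl
  calc ∫⁻ x in S, ENNReal.ofReal |g x| ∂ν = eLpNorm g 1 (ν.restrict S) := by
        simp [eLpNorm_one_eq_lintegral_enorm, Real.enorm_eq_ofReal_abs]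
    _ ≤ eLpNorm g (ENNReal.ofReal p) (ν.restrict S) *
          ν.restrict S univ ^ (1 / (1 : ℝ≥0∞).toReal - 1 / (ENNReal.ofReal p).toReal) :=
        eLpNorm_le_eLpNorm_mul_rpow_measure_univ (by simpa using hp)
          (hg.mono_measure hrestrict)
    _ ≤ eLpNorm g (ENNReal.ofReal p) (ν.restrict A) * ν S ^ (1 - 1 / p) := by
        rw [Measure.restrict_apply_univ, ENNReal.toReal_ofReal (by linarith), ENNReal.toReal_one,
          div_one]
        gcongr

section NormedSpace

variable {E : Type*} [NormedAddCommGroup E] [MeasurableSpace E] {ν : Measure E} {g : E → ℝ}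

theorem setLIntegral_ofReal_abs_le_of_le_norm [OpensMeasurableSpace E] (hg : Measurable g)
    {μ ε : ℝ} (hμ : 0 ≤ μ) (hε : 0 < ε) {S : Set E} (hS : ∀ x ∈ S, ε ≤ ‖x‖) :
    ∫⁻ x in S, ENNReal.ofReal |g x| ∂ν ≤
      ENNReal.ofReal (ε ^ (-μ)) * ∫⁻ x in S, ENNReal.ofReal (|g x| * ‖x‖ ^ μ) ∂ν := by
  rw [← lintegral_const_mul' _ _ ENNReal.ofReal_ne_top]
  refine setLIntegral_mono ((hg.abs.mul (measurable_norm.pow_const μ)).ennreal_ofReal.const_mul _)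
    fun x hx => ?_
  rw [← ENNReal.ofReal_mul (by positivity)]
  refine ENNReal.ofReal_le_ofReal ?_
  have hone : 1 ≤ ε ^ (-μ) * ‖x‖ ^ μ := by
    rw [rpow_neg hε.le, inv_mul_eq_div, ← div_rpow (norm_nonneg x) hε.le]
    exact one_le_rpow ((one_le_div hε).2 (hS x hx)) hμ
  nlinarith [abs_nonneg (g x)]

theorem setLIntegral_ofReal_abs_le_add [OpensMeasurableSpace E] (hg : Measurable g) {p μ ε : ℝ}
    (hp : 1 ≤ p) (hμ : 0 ≤ μ) (hε : 0 < ε) (A : Set E) :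
    ∫⁻ x in A, ENNReal.ofReal |g x| ∂ν ≤
      eLpNorm g (ENNReal.ofReal p) (ν.restrict A) * ν (Metric.ball 0 ε) ^ (1 - 1 / p) +
        ENNReal.ofReal (ε ^ (-μ)) * ∫⁻ x in A, ENNReal.ofReal (|g x| * ‖x‖ ^ μ) ∂ν := by
  rw [← lintegral_inter_add_sdiff _ A Metric.isOpen_ball.measurableSet]
  gcongr
  · refine (setLIntegral_ofReal_abs_le_eLpNorm_mul hp hg.aestronglyMeasurable
      inter_subset_left).trans ?_
    gcongr
    · exact sub_nonneg.2 ((div_le_one (by linarith)).2 hp)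
    · exact inter_subset_right
  · refine (setLIntegral_ofReal_abs_le_of_le_norm hg hμ hε fun x hx => ?_).trans ?_
    · simpa using hx.2
    · gcongr
      exact sdiff_subset

theorem setLIntegral_ball_one_ofReal_mul_norm_rpow_le (hg : Measurable g) {μ : ℝ} (hμ : 0 ≤ μ) :
    ∫⁻ x in Metric.ball 0 1, ENNReal.ofReal (|g x| * ‖x‖ ^ μ) ∂ν ≤
      ∫⁻ x in Metric.ball 0 1, ENNReal.ofReal |g x| ∂ν := by
  refine setLIntegral_mono hg.abs.ennreal_ofReal fun x hx => ENNReal.ofReal_le_ofReal ?_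
  have : ‖x‖ ^ μ ≤ 1 := rpow_le_one (norm_nonneg x) (mem_ball_zero_iff.1 hx).le hμ
  nlinarith [abs_nonneg (g x)]

theorem ofReal_mul_addHaar_ball_rpow [NormedSpace ℝ E] [BorelSpace E] [FiniteDimensional ℝ E]
    [Nontrivial E] (ν : Measure E) [ν.IsAddHaarMeasure] {N ε r : ℝ} (hN : 0 ≤ N) (hε : 0 ≤ ε)
    (hr : 0 ≤ r) :
    ENNReal.ofReal N * ν (Metric.ball 0 ε) ^ r =
      ENNReal.ofReal (N * (ν (Metric.ball 0 1)).toReal ^ r * ε ^ (Module.finrank ℝ E * r)) := by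
  have hone : ν (Metric.ball 0 1) ^ r = ENNReal.ofReal ((ν (Metric.ball 0 1)).toReal ^ r) := by
    rw [← ENNReal.ofReal_rpow_of_nonneg ENNReal.toReal_nonneg hr,
      ENNReal.ofReal_toReal measure_ball_lt_top.ne]
  rw [Measure.addHaar_ball _ _ hε, ENNReal.mul_rpow_of_nonneg _ _ hr, hone,
    ENNReal.ofReal_rpow_of_nonneg (by positivity) hr, ← rpow_natCast, ← rpow_mul hε,
    ← ENNReal.ofReal_mul (by positivity), ← ENNReal.ofReal_mul hN]
  ring_nf

end NormedSpace

/-- Lemma 5.4 of the paper. Let `d ≥ 2`, `1 < p < ∞`, `μ > 0`, `N > 0`.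
There is `C = C(d,p,N,μ) > 0` such that every `g ∈ L^p(B^d)` with `‖g‖_{L^p(B^d)} ≤ N`
satisfies `‖g‖_{L¹(B^d)} ≤ C (∫_{B^d} |g(x)| |x|^μ dx)^α` with
`α = (d-1)/(d-1 + μ p/(p-1))`. -/
theorem statement16 (d : ℕ) (hd : 2 ≤ d) (p μ N : ℝ)
    (hp : 1 < p) (hμ : 0 < μ) (hN : 0 < N) :
    ∃ C : ℝ, 0 < C ∧
      ∀ g : Edim d → ℝ, Measurable g →
        eLpNorm g (ENNReal.ofReal p) (volume.restrict (unitBall d)) ≤ ENNReal.ofReal N →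
        (∫⁻ x in unitBall d, ENNReal.ofReal |g x|)
          ≤ ENNReal.ofReal C *
            (∫⁻ x in unitBall d, ENNReal.ofReal (|g x| * ‖x‖ ^ μ)) ^
              (((d:ℝ) - 1) / ((d:ℝ) - 1 + μ * p / (p - 1))) := by
  have : Nonempty (Fin d) := ⟨⟨0, by omega⟩⟩
  have hd₁ : (1 : ℝ) ≤ d := by exact_mod_cast one_le_two.trans hd
  set r := 1 - 1 / p
  have hr : 0 < r := sub_pos.2 ((div_lt_one (by linarith)).2 hp)
  set K := N * (volume (Metric.ball (0 : Edim d) 1)).toReal ^ r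
  have hK : 0 < K := mul_pos hN (rpow_pos_of_pos (ENNReal.toReal_pos
    (Metric.measure_ball_pos volume 0 one_pos).ne' measure_ball_lt_top.ne) _)
  set α := ((d:ℝ) - 1) / ((d:ℝ) - 1 + μ * p / (p - 1))
  have hα₀ : 0 ≤ α := div_nonneg (sub_nonneg.2 hd₁)
    (add_nonneg (sub_nonneg.2 hd₁) (div_nonneg (by positivity) (by linarith)))
  refine ⟨2 * K ^ (1 - α), mul_pos two_pos (rpow_pos_of_pos hK _), fun g hg hgN => ?_⟩
  have hball (ε : ℝ) (hε : 0 ≤ ε) : ENNReal.ofReal N * volume (Metric.ball (0 : Edim d) ε) ^ r =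
      ENNReal.ofReal (K * ε ^ ((d : ℝ) * r)) := by
    rw [ofReal_mul_addHaar_ball_rpow volume hN.le hε hr.le, finrank_euclideanSpace_fin]
  refine ENNReal.le_ofReal_mul_rpow_of_forall_le_add (by positivity) hμ.le hα₀
    (sub_one_div_sub_one_add_le hd₁ hp hμ) hK
    (setLIntegral_ball_one_ofReal_mul_norm_rpow_le hg hμ.le) ?_ fun ε hε => ?_
  · calc ∫⁻ x in unitBall d, ENNReal.ofReal |g x|
        ≤ eLpNorm g (ENNReal.ofReal p) (volume.restrict (unitBall d)) * volume (unitBall d) ^ r :=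
          setLIntegral_ofReal_abs_le_eLpNorm_mul hp.le hg.aestronglyMeasurable subset_rfl
      _ ≤ ENNReal.ofReal (K * 1 ^ ((d : ℝ) * r)) := by
          rw [← hball 1 zero_le_one]
          gcongr
          exact subset_rfl
      _ = ENNReal.ofReal K := by rw [one_rpow, mul_one]
  · refine (setLIntegral_ofReal_abs_le_add hg hp.le hμ.le hε _).trans ?_
    rw [← hball ε hε.le]
    gcongr
end
end
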